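/- arXiv:1212.2933 — 4 statements merged into one kernel-verified Lean document; each statement's English description precedes it below -/
import Mathlib

section
/- For every integer x ≥ 1, under P^x the stopped process Y_{n∧τ₀}, where Y_n := (∏_{j=1}^{n} (1 − H(u(W_j))))·u(W_n) (with the convention that the empty product ∏_{j=1}^{0} equals 1), is a martingale with respect to the natural filtration generated by the random walk (W_n), and takes values in [0,1]. -/
/-!
Since `(1 - H(s)) s = Q(s)`, one step multiplies `Yₙ` by `Q(u(Wₙ₊₁)) / u(Wₙ)`. The next increment
of `W` is independent of the past with law `a(-·)`, so on `{Wₙ ≥ 1}` the convolution equation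
`u = Σ_y a_y Q(u(· - y))` gives `𝔼[Q(u(Wₙ₊₁)) | ℱₙ] = u(Wₙ)`: `Y` has the martingale property
as long as the walk has not entered `(-∞, 0]`, which is all the stopped process needs. The bounds
come from `0 ≤ Q(s) ≤ s` on `[0, 1]` (Bernoulli's inequality and mean one), i.e. `1 - H ∈ [0, 1]`.
-/

open Filter Real Set MeasureTheory ProbabilityTheory

/-- The random walk started at `x` with increments `ξ 1, ξ 2, …`:
`walk ξ x n ω = x + ξ₁(ω) + ⋯ + ξₙ(ω)`. -/
def walk {Ω : Type} (ξ : ℕ → Ω → ℤ) (x : ℤ) (n : ℕ) (ω : Ω) : ℤ :=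
  x + ∑ i ∈ Finset.Icc 1 n, ξ i ω

/-- `Hfun p s = (s - Q(s))/s` where `Q(s) = 1 - Σₖ pₖ (1-s)ᵏ`, with `Hfun p 0 = 0`. -/
noncomputable def Hfun (p : ℕ → ℝ) (s : ℝ) : ℝ :=
  if s = 0 then 0 else (s - (1 - ∑' k : ℕ, p k * (1 - s) ^ k)) / s

/-- The natural filtration generated by the random walk `walk ξ x`. -/
noncomputable def walkFiltration {Ω : Type} [m0 : MeasurableSpace Ω] (ξ : ℕ → Ω → ℤ)
    (hξmeas : ∀ n, Measurable (ξ n)) (x : ℤ) : Filtration ℕ m0 :=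
  Filtration.natural (fun n => walk ξ x n) (fun n => by
    have h : Measurable (walk ξ x n) := by
      unfold walk
      exact measurable_const.add (Finset.measurable_sum _ fun i _ => hξmeas i)
    exact h.stronglyMeasurable)

/-- The function `Q` of the paper. -/
noncomputable def offspringQ (p : ℕ → ℝ) (s : ℝ) : ℝ :=
  1 - ∑' k : ℕ, p k * (1 - s) ^ k

lemma summable_of_tsum_ne_zero {ι α : Type*} [AddCommMonoid α] [TopologicalSpace α] {f : ι → α}
    (h : ∑' i, f i ≠ 0) : Summable f := by
  by_contra hf
  exact h (tsum_eq_zero_of_not_summable hf)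

section OffspringQ

variable {p : ℕ → ℝ} {s : ℝ}

lemma summable_mul_one_sub_pow (hp0 : ∀ k, 0 ≤ p k) (hp : Summable p) (hs0 : 0 ≤ s)
    (hs1 : s ≤ 1) : Summable fun k => p k * (1 - s) ^ k :=
  hp.of_nonneg_of_le (fun k => mul_nonneg (hp0 k) (pow_nonneg (by linarith) k))
    fun k => mul_le_of_le_one_right (hp0 k) (pow_le_one₀ (by linarith) (by linarith))

lemma offspringQ_nonneg (hp0 : ∀ k, 0 ≤ p k) (hp1 : ∑' k, p k = 1) (hs0 : 0 ≤ s)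
    (hs1 : s ≤ 1) : 0 ≤ offspringQ p s := by
  have hp : Summable p := summable_of_tsum_ne_zero (by simp [hp1])
  have : ∑' k, p k * (1 - s) ^ k ≤ ∑' k, p k :=
    (summable_mul_one_sub_pow hp0 hp hs0 hs1).tsum_le_tsum
      (fun k => mul_le_of_le_one_right (hp0 k) (pow_le_one₀ (by linarith) (by linarith))) hp
  rw [offspringQ]
  linarith

lemma offspringQ_le_self (hp0 : ∀ k, 0 ≤ p k) (hp1 : ∑' k, p k = 1)
    (hpmean_summ : Summable fun k : ℕ => (k : ℝ) * p k) (hpmean : ∑' k : ℕ, (k : ℝ) * p k ≤ 1)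
    (hs0 : 0 ≤ s) (hs1 : s ≤ 1) : offspringQ p s ≤ s := by
  have hp : Summable p := summable_of_tsum_ne_zero (by simp [hp1])
  have bernoulli : ∀ k : ℕ, p k - s * ((k : ℝ) * p k) ≤ p k * (1 - s) ^ k := fun k => by
    have := mul_le_mul_of_nonneg_left (one_add_mul_le_pow (by linarith : (-2 : ℝ) ≤ -s) k)
      (hp0 k)
    rw [← sub_eq_add_neg] at this
    linarith
  have := (hp.sub (hpmean_summ.mul_left s)).tsum_le_tsum bernoulli
    (summable_mul_one_sub_pow hp0 hp hs0 hs1)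
  rw [Summable.tsum_sub hp (hpmean_summ.mul_left s), tsum_mul_left, hp1] at this
  rw [offspringQ]
  nlinarith

lemma one_sub_Hfun_mul_self (hs : s ≠ 0) : (1 - Hfun p s) * s = offspringQ p s := by
  rw [Hfun, if_neg hs, offspringQ]
  field_simp
  ring

lemma one_sub_Hfun_mem_Icc (hp0 : ∀ k, 0 ≤ p k) (hp1 : ∑' k, p k = 1)
    (hpmean_summ : Summable fun k : ℕ => (k : ℝ) * p k) (hpmean : ∑' k : ℕ, (k : ℝ) * p k ≤ 1)
    (hs0 : 0 < s) (hs1 : s ≤ 1) : 1 - Hfun p s ∈ Icc 0 1 := by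
  rw [eq_div_of_mul_eq hs0.ne' (one_sub_Hfun_mul_self hs0.ne')]
  exact ⟨div_nonneg (offspringQ_nonneg hp0 hp1 hs0.le hs1) hs0.le,
    div_le_one_of_le₀ (offspringQ_le_self hp0 hp1 hpmean_summ hpmean hs0.le hs1) hs0.le⟩

end OffspringQ

section Independence

variable {Ω β : Type*} {m : MeasurableSpace Ω} [m0 : MeasurableSpace Ω] {P : Measure Ω}
  [IsFiniteMeasure P]

lemma summable_measureReal_preimage_singleton [Countable β] [MeasurableSpace β]
    [MeasurableSingletonClass β] {ξ : Ω → β} (hξ : Measurable ξ) :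
    Summable fun b => P.real (ξ ⁻¹' {b}) := by
  refine ENNReal.summable_toReal (ne_top_of_le_ne_top (measure_ne_top P (⋃ b, ξ ⁻¹' {b})) ?_)
  exact tsum_meas_le_meas_iUnion_of_disjoint P (fun b => hξ (measurableSet_singleton b))
    fun b b' hbb' => disjoint_singleton.mpr hbb' |>.preimage ξ

lemma integral_indicator_eq_measureReal_mul_of_indep (hm : m ≤ m0) {m' : MeasurableSpace Ω}
    (hm' : m' ≤ m0) (hind : Indep m m' P) {S : Set Ω} (hS : MeasurableSet[m'] S) {f : Ω → ℝ}
    (hf : StronglyMeasurable[m] f) (hfi : Integrable f P) :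
    ∫ ω, S.indicator f ω ∂P = P.real S * ∫ ω, f ω ∂P := by
  rw [integral_indicator (hm' S hS), ← setIntegral_condExp hm' hfi hS,
    setIntegral_congr_ae (hm' S hS) ((condExp_indep_eq hm hm' hf hind).mono fun _ h _ => h),
    setIntegral_const, smul_eq_mul]

theorem integral_comp_eq_integral_tsum_of_indep [Countable β] [MeasurableSpace β]
    [MeasurableSingletonClass β] (hm : m ≤ m0) {ξ : Ω → β} (hξ : Measurable ξ)
    (hind : Indep m (MeasurableSpace.comap ξ ‹_›) P) {f : β → Ω → ℝ}
    (hf : ∀ b, Measurable[m] (f b)) {C : ℝ} (hC : ∀ b ω, ‖f b ω‖ ≤ C) :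
    ∫ ω, f (ξ ω) ω ∂P = ∫ ω, ∑' b, P.real (ξ ⁻¹' {b}) * f b ω ∂P := by
  have hξm : MeasurableSpace.comap ξ ‹_› ≤ m0 := hξ.comap_le
  have hS : ∀ b, MeasurableSet[MeasurableSpace.comap ξ ‹_›] (ξ ⁻¹' {b}) := fun b =>
    ⟨{b}, measurableSet_singleton b, rfl⟩
  have hint : ∀ b, Integrable (f b) P := fun b =>
    .of_bound ((hf b).mono hm le_rfl).aestronglyMeasurable C (ae_of_all _ (hC b))
  have hindicator : ∀ {g : Ω → ℝ}, Measurable[m] g → Integrable g P → ∀ b,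
      ∫ ω, (ξ ⁻¹' {b}).indicator g ω ∂P = P.real (ξ ⁻¹' {b}) * ∫ ω, g ω ∂P :=
    fun hg hgi b => integral_indicator_eq_measureReal_mul_of_indep hm hξm hind (hS b)
      hg.stronglyMeasurable hgi
  -- controls both exchanges of `∑'` and `∫` below
  have hsummable : Summable fun b => P.real (ξ ⁻¹' {b}) * ∫ ω, ‖f b ω‖ ∂P := by
    refine ((summable_measureReal_preimage_singleton hξ).mul_right
      (P.real univ * C)).of_nonneg_of_le
      (fun b => mul_nonneg measureReal_nonneg (integral_nonneg fun _ => norm_nonneg _))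
      fun b => mul_le_mul_of_nonneg_left ?_ measureReal_nonneg
    rw [← smul_eq_mul, ← integral_const]
    exact integral_mono (hint b).norm (integrable_const C) (hC b)
  have hpointwise : ∀ ω, f (ξ ω) ω = ∑' b, (ξ ⁻¹' {b}).indicator (f b) ω := fun ω => by
    rw [tsum_eq_single (f := fun b => (ξ ⁻¹' {b}).indicator (f b) ω) (ξ ω)
      fun b hb => indicator_of_notMem (s := ξ ⁻¹' {b}) (fun h => hb (Eq.symm h)) _]
    exact (indicator_of_mem (s := ξ ⁻¹' {ξ ω}) rfl (f (ξ ω))).symm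
  calc ∫ ω, f (ξ ω) ω ∂P
      = ∑' b, ∫ ω, (ξ ⁻¹' {b}).indicator (f b) ω ∂P := by
        simp_rw [hpointwise]
        refine (integral_tsum_of_summable_integral_norm
          (fun b => (hint b).indicator (hξm _ (hS b))) ?_).symm
        simp_rw [norm_indicator_eq_indicator_norm]
        exact hsummable.congr fun b =>
          (hindicator (measurable_norm.comp (hf b)) (hint b).norm b).symm
    _ = ∑' b, ∫ ω, P.real (ξ ⁻¹' {b}) * f b ω ∂P := by
        simp_rw [integral_const_mul, hindicator (hf _) (hint _)]
    _ = ∫ ω, ∑' b, P.real (ξ ⁻¹' {b}) * f b ω ∂P := by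
        refine integral_tsum_of_summable_integral_norm (fun b => (hint b).const_mul _) ?_
        simp_rw [norm_mul, Real.norm_of_nonneg measureReal_nonneg, integral_const_mul]
        exact hsummable

end Independence

section Hitting

variable {Ω β : Type*} {W : ℕ → Ω → β} {S : Set β} {n : ℕ} {ω : Ω}

lemma hittingBtwn_zero_eq_self (h : ∀ j ≤ n, W j ω ∉ S) : hittingBtwn W S 0 n ω = n :=
  hittingBtwn_eq_end_iff.mpr fun ⟨j, hj, hjS⟩ => absurd hjS (h j hj.2)

lemma hittingBtwn_zero_succ_eq_succ (h : ∀ j ≤ n, W j ω ∉ S) :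
    hittingBtwn W S 0 (n + 1) ω = n + 1 := by
  refine le_antisymm (hittingBtwn_le ω) (not_lt.mp fun hlt => ?_)
  obtain ⟨j, hj, hjS⟩ := (hittingBtwn_lt_iff (n + 1) le_rfl).mp hlt
  exact h j (Nat.lt_succ_iff.mp hj.2) hjS

lemma apply_hittingBtwn_zero_succ {E : Type*} [AddCommGroup E] (Y : ℕ → Ω → E) :
    Y (hittingBtwn W S 0 (n + 1) ω) ω = Y (hittingBtwn W S 0 n ω) ω +
      {ω | ∀ j ≤ n, W j ω ∉ S}.indicator (fun ω => Y (n + 1) ω - Y n ω) ω := by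
  by_cases h : ∀ j ≤ n, W j ω ∉ S
  · rw [indicator_of_mem (s := {ω | ∀ j ≤ n, W j ω ∉ S}) h, hittingBtwn_zero_succ_eq_succ h,
      hittingBtwn_zero_eq_self h]
    abel
  · obtain ⟨j, hj, hjS⟩ : ∃ j ≤ n, W j ω ∈ S := by simpa using h
    rw [indicator_of_notMem (s := {ω | ∀ j ≤ n, W j ω ∉ S}) h, add_zero,
      hittingBtwn_eq_hittingBtwn_of_exists n.le_succ ⟨j, ⟨j.zero_le, hj⟩, hjS⟩]

lemma MeasureTheory.StronglyAdapted.apply_hittingBtwn_zero [MeasurableSpace Ω]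
    [MeasurableSpace β] {E : Type*} [TopologicalSpace E] [TopologicalSpace.PseudoMetrizableSpace E]
    {ℱ : Filtration ℕ ‹MeasurableSpace Ω›} {Y : ℕ → Ω → E} (hY : StronglyAdapted ℱ Y)
    (hW : Adapted ℱ W) (hS : MeasurableSet S) :
    StronglyAdapted ℱ fun n ω => Y (hittingBtwn W S 0 n ω) ω := fun _ =>
  stronglyMeasurable_stoppedValue_of_le hY.isStronglyProgressive_of_discrete
    (hW.isStoppingTime_hittingBtwn hS) fun ω => WithTop.coe_le_coe.mpr (hittingBtwn_le ω)

theorem martingale_apply_hittingBtwn_zero [MeasurableSpace Ω] [MeasurableSpace β]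
    {ℱ : Filtration ℕ ‹MeasurableSpace Ω›} {P : Measure Ω} [IsFiniteMeasure P]
    {Y : ℕ → Ω → ℝ} (hY : StronglyAdapted ℱ Y) (hYint : ∀ n, Integrable (Y n) P)
    (hW : Adapted ℱ W) (hS : MeasurableSet S)
    (hstep : ∀ n t, MeasurableSet[ℱ n] t → t ⊆ {ω | ∀ j ≤ n, W j ω ∉ S} →
      ∫ ω in t, Y (n + 1) ω ∂P = ∫ ω in t, Y n ω ∂P) :
    Martingale (fun n ω => Y (hittingBtwn W S 0 n ω) ω) ℱ P := by
  have hτ : ∀ n : ℕ, IsStoppingTime ℱ fun ω => ((hittingBtwn W S 0 n ω : ℕ) : WithTop ℕ) :=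
    fun _ => hW.isStoppingTime_hittingBtwn hS
  have hint : ∀ n, Integrable (fun ω => Y (hittingBtwn W S 0 n ω) ω) P := fun n =>
    integrable_stoppedValue ℕ (hτ n) hYint fun ω => WithTop.coe_le_coe.mpr (hittingBtwn_le ω)
  refine martingale_of_setIntegral_eq_succ (hY.apply_hittingBtwn_zero hW hS) hint
    fun n s hs => ?_
  have hN : MeasurableSet[ℱ n] {ω | ∀ j ≤ n, W j ω ∉ S} := by
    simp_rw [ofPred_forall]
    exact MeasurableSet.iInter fun j => MeasurableSet.iInter fun hj =>
      (hW.measurable_le hj hS).compl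
  simp_rw [apply_hittingBtwn_zero_succ Y]
  rw [integral_add (hint n).integrableOn
      ((show Integrable (fun ω => Y (n + 1) ω - Y n ω) P from (hYint _).sub (hYint n)).indicator
        (ℱ.le n _ hN)).integrableOn,
    setIntegral_indicator (ℱ.le n _ hN),
    integral_sub (hYint _).integrableOn (hYint n).integrableOn,
    hstep n _ (hs.inter hN) inter_subset_right, sub_self, add_zero]

end Hitting

section Walk

variable {Ω : Type} {ξ : ℕ → Ω → ℤ} {x : ℤ}

lemma walk_succ (n : ℕ) (ω : Ω) : walk ξ x (n + 1) ω = walk ξ x n ω + ξ (n + 1) ω := by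
  rw [walk, walk, Finset.sum_Icc_succ_top (by omega), add_assoc]

variable [MeasurableSpace Ω]

lemma adapted_walk (hξmeas : ∀ n, Measurable (ξ n)) :
    Adapted (walkFiltration ξ hξmeas x) (walk ξ x) :=
  (Filtration.stronglyAdapted_natural _).adapted

lemma indep_walkFiltration_comap_succ {P : Measure Ω} (hξmeas : ∀ n, Measurable (ξ n))
    (hξindep : iIndepFun ξ P) (n : ℕ) :
    Indep (walkFiltration ξ hξmeas x n) (MeasurableSpace.comap (ξ (n + 1)) inferInstance) P := by
  have hpast :
      walkFiltration ξ hξmeas x n ≤ ⨆ i ∈ Icc 1 n, MeasurableSpace.comap (ξ i) inferInstance :=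
    iSup₂_le fun j hj => Measurable.comap_le <| measurable_const.add <|
      Finset.measurable_sum _ fun i hi => Measurable.of_comap_le <|
        le_iSup₂ (f := fun i (_ : i ∈ Icc 1 n) => MeasurableSpace.comap (ξ i) inferInstance) i
          ⟨(Finset.mem_Icc.mp hi).1, (Finset.mem_Icc.mp hi).2.trans hj⟩
  have hdisj : Disjoint (Icc 1 n) {n + 1} := by simp
  exact indep_of_indep_of_le_left (indep_of_indep_of_le_right
    (indep_iSup_of_disjoint (fun i => (hξmeas i).comap_le) hξindep.iIndep hdisj)
    (le_iSup₂ (f := fun i (_ : i ∈ ({n + 1} : Set ℕ)) =>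
      MeasurableSpace.comap (ξ i) inferInstance) (n + 1) rfl)) hpast

/-- Markov property of the walk at time `n + 1`, for bounded test functions. -/
lemma integral_mul_comp_walk_succ {P : Measure Ω} [IsFiniteMeasure P]
    (hξmeas : ∀ n, Measurable (ξ n)) (hξindep : iIndepFun ξ P) {n : ℕ} {g : Ω → ℝ}
    (hg : Measurable[walkFiltration ξ hξmeas x n] g) {φ : ℤ → ℝ} {Cg Cφ : ℝ}
    (hgC : ∀ ω, ‖g ω‖ ≤ Cg) (hφC : ∀ z, ‖φ z‖ ≤ Cφ) :
    ∫ ω, g ω * φ (walk ξ x (n + 1) ω) ∂P =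
      ∫ ω, g ω * ∑' z, P.real (ξ (n + 1) ⁻¹' {z}) * φ (walk ξ x n ω + z) ∂P := by
  have hwalk : Measurable[walkFiltration ξ hξmeas x n] (walk ξ x n) := adapted_walk hξmeas n
  simp_rw [walk_succ]
  rw [integral_comp_eq_integral_tsum_of_indep ((walkFiltration ξ hξmeas x).le n) (hξmeas (n + 1))
    (indep_walkFiltration_comap_succ hξmeas hξindep n)
    (f := fun z ω => g ω * φ (walk ξ x n ω + z))
    (fun z => hg.mul ((measurable_of_countable φ).comp (hwalk.add_const z)))
    (C := Cg * Cφ) fun z ω => by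
      rw [norm_mul]
      exact mul_le_mul (hgC ω) (hφC _) (norm_nonneg _) ((norm_nonneg _).trans (hgC ω))]
  simp_rw [← tsum_mul_left, mul_left_comm]

end Walk

/-- The process `Yₙ` of the paper, along an arbitrary path `W`. -/
noncomputable def fkProcess {Ω : Type*} (p : ℕ → ℝ) (u : ℤ → ℝ) (W : ℕ → Ω → ℤ) (n : ℕ)
    (ω : Ω) : ℝ :=
  (∏ j ∈ Finset.Icc 1 n, (1 - Hfun p (u (W j ω)))) * u (W n ω)

section FKProcess

variable {Ω : Type*} {p : ℕ → ℝ} {u : ℤ → ℝ} {W : ℕ → Ω → ℤ}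

lemma fkProcess_succ {n : ℕ} {ω : Ω} (hu : u (W (n + 1) ω) ≠ 0) :
    fkProcess p u W (n + 1) ω =
      (∏ j ∈ Finset.Icc 1 n, (1 - Hfun p (u (W j ω)))) * offspringQ p (u (W (n + 1) ω)) := by
  rw [fkProcess, Finset.prod_Icc_succ_top (by omega), mul_assoc, one_sub_Hfun_mul_self hu]

lemma prod_one_sub_Hfun_mem_Icc (hp0 : ∀ k, 0 ≤ p k) (hp1 : ∑' k, p k = 1)
    (hpmean_summ : Summable fun k : ℕ => (k : ℝ) * p k) (hpmean : ∑' k : ℕ, (k : ℝ) * p k ≤ 1)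
    (hupos : ∀ x, 0 < u x) (hule : ∀ x, u x ≤ 1) (n : ℕ) (ω : Ω) :
    ∏ j ∈ Finset.Icc 1 n, (1 - Hfun p (u (W j ω))) ∈ Icc 0 1 := by
  have hH : ∀ j, 1 - Hfun p (u (W j ω)) ∈ Icc 0 1 := fun j =>
    one_sub_Hfun_mem_Icc hp0 hp1 hpmean_summ hpmean (hupos _) (hule _)
  exact ⟨Finset.prod_nonneg fun j _ => (hH j).1,
    Finset.prod_le_one (fun j _ => (hH j).1) fun j _ => (hH j).2⟩

lemma fkProcess_mem_Icc (hp0 : ∀ k, 0 ≤ p k) (hp1 : ∑' k, p k = 1)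
    (hpmean_summ : Summable fun k : ℕ => (k : ℝ) * p k) (hpmean : ∑' k : ℕ, (k : ℝ) * p k ≤ 1)
    (hupos : ∀ x, 0 < u x) (hule : ∀ x, u x ≤ 1) (n : ℕ) (ω : Ω) :
    fkProcess p u W n ω ∈ Icc 0 1 := by
  have hprod := prod_one_sub_Hfun_mem_Icc hp0 hp1 hpmean_summ hpmean hupos hule (W := W) n ω
  exact ⟨mul_nonneg hprod.1 (hupos _).le, mul_le_one₀ hprod.2 (hupos _).le (hule _)⟩

lemma stronglyAdapted_fkProcess [MeasurableSpace Ω] {ℱ : Filtration ℕ ‹MeasurableSpace Ω›}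
    (hW : Adapted ℱ W) : StronglyAdapted ℱ (fkProcess p u W) := fun n =>
  Measurable.stronglyMeasurable <|
    (Finset.measurable_prod (Finset.Icc 1 n) fun _ hj =>
      (measurable_of_countable fun w => 1 - Hfun p (u w)).comp
        (hW.measurable_le (Finset.mem_Icc.mp hj).2)).mul
    ((measurable_of_countable u).comp (hW n))

end FKProcess

section FeynmanKac

variable {p : ℕ → ℝ} {a : ℤ → ℝ} {u : ℤ → ℝ}

lemma tsum_mul_offspringQ_add (huconv : ∀ x : ℤ, 1 ≤ x → u x = ∑' y, a y * offspringQ p (u (x - y)))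
    {w : ℤ} (hw : 1 ≤ w) : ∑' z, a (-z) * offspringQ p (u (w + z)) = u w := by
  rw [huconv w hw, ← (Equiv.neg ℤ).tsum_eq]
  simp [sub_eq_add_neg]

variable {Ω : Type} [MeasurableSpace Ω] {P : Measure Ω} [IsFiniteMeasure P]
  {ξ : ℕ → Ω → ℤ} {x : ℤ}

lemma setIntegral_fkProcess_walk_succ (hp0 : ∀ k, 0 ≤ p k) (hp1 : ∑' k, p k = 1)
    (hpmean_summ : Summable fun k : ℕ => (k : ℝ) * p k) (hpmean : ∑' k : ℕ, (k : ℝ) * p k ≤ 1)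
    (ha0 : ∀ y, 0 ≤ a y) (hupos : ∀ x, 0 < u x) (hule : ∀ x, u x ≤ 1)
    (huconv : ∀ x : ℤ, 1 ≤ x → u x = ∑' y, a y * offspringQ p (u (x - y)))
    (hξmeas : ∀ n, Measurable (ξ n)) (hξindep : iIndepFun ξ P)
    (hξlaw : ∀ (n : ℕ) (y : ℤ), P {ω | ξ n ω = y} = ENNReal.ofReal (a (-y)))
    {n : ℕ} {t : Set Ω} (ht : MeasurableSet[walkFiltration ξ hξmeas x n] t)
    (htW : ∀ ω ∈ t, 1 ≤ walk ξ x n ω) :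
    ∫ ω in t, fkProcess p u (walk ξ x) (n + 1) ω ∂P =
      ∫ ω in t, fkProcess p u (walk ξ x) n ω ∂P := by
  set A : Ω → ℝ := fun ω => ∏ j ∈ Finset.Icc 1 n, (1 - Hfun p (u (walk ξ x j ω)))
  have htm : MeasurableSet t := (walkFiltration ξ hξmeas x).le n t ht
  have hA : Measurable[walkFiltration ξ hξmeas x n] (t.indicator A) :=
    (Finset.measurable_prod (Finset.Icc 1 n) fun _ hj =>
      (measurable_of_countable fun w => 1 - Hfun p (u w)).comp
        ((adapted_walk hξmeas).measurable_le (Finset.mem_Icc.mp hj).2)).indicator ht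
  have hA1 : ∀ ω, ‖t.indicator A ω‖ ≤ 1 := fun ω => by
    have hAω := prod_one_sub_Hfun_mem_Icc hp0 hp1 hpmean_summ hpmean hupos hule
      (W := walk ξ x) n ω
    exact (norm_indicator_le_norm_self A ω).trans
      ((Real.norm_of_nonneg hAω.1).trans_le hAω.2)
  have hQ1 : ∀ w, ‖offspringQ p (u w)‖ ≤ 1 := fun w => by
    rw [Real.norm_of_nonneg (offspringQ_nonneg hp0 hp1 (hupos w).le (hule w))]
    exact (offspringQ_le_self hp0 hp1 hpmean_summ hpmean (hupos w).le (hule w)).trans (hule w)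
  have hlaw : ∀ z, P.real (ξ (n + 1) ⁻¹' {z}) = a (-z) := fun z => by
    rw [measureReal_def, ← ofPred_eq_eq_singleton, preimage_ofPred_eq, hξlaw,
      ENNReal.toReal_ofReal (ha0 _)]
  calc ∫ ω in t, fkProcess p u (walk ξ x) (n + 1) ω ∂P
      = ∫ ω, t.indicator A ω * offspringQ p (u (walk ξ x (n + 1) ω)) ∂P := by
        rw [← integral_indicator htm]
        congr with ω
        by_cases hω : ω ∈ t
        · rw [indicator_of_mem hω, indicator_of_mem hω, fkProcess_succ (hupos _).ne']
        · rw [indicator_of_notMem hω, indicator_of_notMem hω, zero_mul]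
    _ = ∫ ω, t.indicator A ω *
          ∑' z, P.real (ξ (n + 1) ⁻¹' {z}) * offspringQ p (u (walk ξ x n ω + z)) ∂P :=
        integral_mul_comp_walk_succ hξmeas hξindep hA hA1 hQ1
    _ = ∫ ω, t.indicator A ω * u (walk ξ x n ω) ∂P := by
        congr with ω
        by_cases hω : ω ∈ t
        · simp_rw [hlaw, tsum_mul_offspringQ_add huconv (htW ω hω)]
        · simp [hω]
    _ = ∫ ω in t, fkProcess p u (walk ξ x) n ω ∂P := by
        rw [← integral_indicator htm]
        congr with ω
        by_cases hω : ω ∈ t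
        · rw [indicator_of_mem hω, indicator_of_mem hω, fkProcess]
        · rw [indicator_of_notMem hω, indicator_of_notMem hω, zero_mul]

end FeynmanKac

theorem fk_stopped_process_martingale_general
    (p : ℕ → ℝ) (a : ℤ → ℝ)
    -- offspring distribution: critical, variance σ2 ∈ (0,∞), finite third moment
    (hp0 : ∀ k, 0 ≤ p k)
    (hp1 : ∑' k, p k = 1)
    (hpmean_summ : Summable (fun k : ℕ => (k : ℝ) * p k))
    (hpmean : ∑' k : ℕ, (k : ℝ) * p k = 1)
    -- step distribution: mean 0, variance η2 ∈ (0,∞), finite r-th moment for some r > 4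
    (ha0 : ∀ y, 0 ≤ a y)
    -- the tail distribution function u(x) = P{M > x} of the maximal displacement
    (u : ℤ → ℝ)
    (hupos : ∀ x : ℤ, 0 < u x)
    (hule : ∀ x : ℤ, u x ≤ 1)
    (huconv : ∀ x : ℤ, 1 ≤ x →
      u x = ∑' y : ℤ, a y * (1 - ∑' k : ℕ, p k * (1 - u (x - y)) ^ k))
    -- the random walk W with i.i.d. increments of law P{increment = y} = a(-y);
    -- walk ξ x n ω = x + ξ₁ + ⋯ + ξₙ is the walk started at x
    {Ω : Type} [MeasurableSpace Ω] (P : Measure Ω) [IsProbabilityMeasure P]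
    (ξ : ℕ → Ω → ℤ)
    (hξmeas : ∀ n, Measurable (ξ n))
    (hξindep : iIndepFun ξ P)
    (hξlaw : ∀ (n : ℕ) (y : ℤ), P {ω | ξ n ω = y} = ENNReal.ofReal (a (-y)))
    (x : ℤ) :
    Martingale
      (fun (n : ℕ) (ω : Ω) =>
        (∏ j ∈ Finset.Icc 1 (hittingBtwn (walk ξ x) (Set.Iic 0) 0 n ω),
            (1 - Hfun p (u (walk ξ x j ω)))) *
          u (walk ξ x (hittingBtwn (walk ξ x) (Set.Iic 0) 0 n ω) ω))
      (walkFiltration ξ hξmeas x) P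
    ∧ ∀ (n : ℕ) (ω : Ω),
        (∏ j ∈ Finset.Icc 1 (hittingBtwn (walk ξ x) (Set.Iic 0) 0 n ω),
            (1 - Hfun p (u (walk ξ x j ω)))) *
          u (walk ξ x (hittingBtwn (walk ξ x) (Set.Iic 0) 0 n ω) ω) ∈ Set.Icc (0 : ℝ) 1 := by
  have hW := adapted_walk (x := x) hξmeas
  have hY := stronglyAdapted_fkProcess (p := p) (u := u) hW
  have hY01 := fkProcess_mem_Icc hp0 hp1 hpmean_summ hpmean.le hupos hule (W := walk ξ x)
  refine ⟨martingale_apply_hittingBtwn_zero hY (fun n => ?_) hW measurableSet_Iic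
    fun n t ht htN => ?_, fun n ω => hY01 _ ω⟩
  · refine .of_bound ((hY n).mono ((walkFiltration ξ hξmeas x).le n)).aestronglyMeasurable 1
      (ae_of_all _ fun ω => ?_)
    rw [Real.norm_of_nonneg (hY01 n ω).1]
    exact (hY01 n ω).2
  · exact setIntegral_fkProcess_walk_succ hp0 hp1 hpmean_summ hpmean.le ha0 hupos hule huconv
      hξmeas hξindep hξlaw ht fun ω hω => Int.add_one_le_iff.mpr (by simpa using htN hω n le_rfl)

/-- Proposition 3 of Lalley–Shao: for every integer `x ≥ 1`, under
`P^x` the stopped process `Y_{n∧τ₀}`, where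
`Yₙ = (∏_{j=1}^{n} (1 - H(u(W_j)))) · u(W_n)`, is a bounded martingale with respect
to the natural filtration of the random walk `(W_n)`, taking values in `[0,1]`.
Here `hitting (walk ξ x) (Set.Iic 0) 0 n ω` is `n ∧ τ₀(ω)` (with the convention
that the walk is not stopped if it has not yet entered `(-∞,0]`). -/
theorem fk_stopped_process_martingale
    (p : ℕ → ℝ) (a : ℤ → ℝ) (σ2 η2 r : ℝ)
    -- offspring distribution: critical, variance σ2 ∈ (0,∞), finite third moment
    (hp0 : ∀ k, 0 ≤ p k)
    (hp1 : ∑' k, p k = 1)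
    (hpmean_summ : Summable (fun k : ℕ => (k : ℝ) * p k))
    (hpmean : ∑' k : ℕ, (k : ℝ) * p k = 1)
    (hp2summ : Summable (fun k : ℕ => (k : ℝ) ^ 2 * p k))
    (hσ2 : σ2 = (∑' k : ℕ, (k : ℝ) ^ 2 * p k) - 1)
    (hσ2pos : 0 < σ2)
    (hp3summ : Summable (fun k : ℕ => (k : ℝ) ^ 3 * p k))
    -- step distribution: mean 0, variance η2 ∈ (0,∞), finite r-th moment for some r > 4
    (ha0 : ∀ y, 0 ≤ a y)
    (ha1 : ∑' y, a y = 1)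
    (hamean_summ : Summable (fun y : ℤ => (y : ℝ) * a y))
    (hamean : ∑' y : ℤ, (y : ℝ) * a y = 0)
    (ha2summ : Summable (fun y : ℤ => (y : ℝ) ^ 2 * a y))
    (hη2 : η2 = ∑' y : ℤ, (y : ℝ) ^ 2 * a y)
    (hη2pos : 0 < η2)
    (hr : 4 < r)
    (harsumm : Summable (fun y : ℤ => |(y : ℝ)| ^ r * a y))
    -- the tail distribution function u(x) = P{M > x} of the maximal displacement
    (u : ℤ → ℝ)
    (humono : Antitone u)
    (huneg : ∀ x : ℤ, x ≤ 0 → u x = 1)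
    (hupos : ∀ x : ℤ, 0 < u x)
    (hule : ∀ x : ℤ, u x ≤ 1)
    (hulim : Tendsto u atTop (nhds 0))
    (huconv : ∀ x : ℤ, 1 ≤ x →
      u x = ∑' y : ℤ, a y * (1 - ∑' k : ℕ, p k * (1 - u (x - y)) ^ k))
    -- the random walk W with i.i.d. increments of law P{increment = y} = a(-y);
    -- walk ξ x n ω = x + ξ₁ + ⋯ + ξₙ is the walk started at x
    {Ω : Type} [MeasurableSpace Ω] (P : Measure Ω) [IsProbabilityMeasure P]
    (ξ : ℕ → Ω → ℤ)
    (hξmeas : ∀ n, Measurable (ξ n))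
    (hξindep : iIndepFun ξ P)
    (hξlaw : ∀ (n : ℕ) (y : ℤ), P {ω | ξ n ω = y} = ENNReal.ofReal (a (-y)))
    (x : ℤ) (hx : 1 ≤ x) :
    Martingale
      (fun (n : ℕ) (ω : Ω) =>
        (∏ j ∈ Finset.Icc 1 (hittingBtwn (walk ξ x) (Set.Iic 0) 0 n ω),
            (1 - Hfun p (u (walk ξ x j ω)))) *
          u (walk ξ x (hittingBtwn (walk ξ x) (Set.Iic 0) 0 n ω) ω))
      (walkFiltration ξ hξmeas x) P
    ∧ ∀ (n : ℕ) (ω : Ω),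
        (∏ j ∈ Finset.Icc 1 (hittingBtwn (walk ξ x) (Set.Iic 0) 0 n ω),
            (1 - Hfun p (u (walk ξ x j ω)))) *
          u (walk ξ x (hittingBtwn (walk ξ x) (Set.Iic 0) 0 n ω) ω) ∈ Set.Icc (0 : ℝ) 1 :=
  fk_stopped_process_martingale_general p a hp0 hp1 hpmean_summ hpmean ha0 u hupos hule huconv P ξ
    hξmeas hξindep hξlaw x
end

section
/- Let σ, η > 0. The function φ(y) = (1 + σ·y/(√6·η))^{−2} is the unique bounded, nonnegative, twice continuously differentiable function φ : [0,∞) → ℝ satisfying φ''(y) = (σ²/η²)·φ(y)² for all y > 0, φ(0) = 1, and lim_{y→∞} φ(y) = 0. -/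
/-!
Write `σ y / (√6 η) = k y`, so the equation reads `ψ'' = 6k²ψ²`. Since `ψ'' ≥ 0`, `ψ'` is
nondecreasing, and `ψ → 0` forces `ψ' ≤ 0`. The energy `ψ'² - 4k²ψ³` is conserved, and again
`ψ → 0` forces it to vanish, so `ψ' = -2k ψ^{3/2}`. Because `ψ ≤ 1`, this gives `ψ' ≥ -2kψ` and
hence `ψ > 0`; then `1/√ψ` has derivative `k` and equals `1` at `0`, so `ψ = (1 + k y)⁻²`.
-/

open Filter Real Set Topology

theorem nonpos_of_le_deriv_of_tendsto {f : ℝ → ℝ} {a m l : ℝ}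
    (hf : ∀ x, a ≤ x → DifferentiableAt ℝ f x) (hm : ∀ x, a < x → m ≤ deriv f x)
    (hl : Tendsto f atTop (𝓝 l)) : m ≤ 0 := by
  by_contra! hpos
  have hgrowth : ∀ y, a ≤ y → f a + m * (y - a) ≤ f y := fun y hy => by
    have := (convex_Ici a).mul_sub_le_image_sub_of_le_deriv
      (fun x hx => (hf x hx).continuousAt.continuousWithinAt)
      (fun x hx => (hf x (interior_subset hx)).differentiableWithinAt)
      (fun x hx => hm x (by simpa using hx)) a self_mem_Ici y hy hy
    linarith
  have hlin : Tendsto (fun y => f a + m * (y - a)) atTop atTop :=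
    tendsto_atTop_add_const_left _ _
      ((tendsto_atTop_add_const_right _ _ tendsto_id).const_mul_atTop hpos)
  exact not_tendsto_nhds_of_tendsto_atTop
    (tendsto_atTop_mono' _ (eventually_atTop.2 ⟨a, hgrowth⟩) hlin) l hl

theorem hasDerivAt_one_add_mul (k y : ℝ) : HasDerivAt (fun z => 1 + k * z) k y := by
  simpa using ((hasDerivAt_id y).const_mul k).const_add 1

section ExplicitSolution

variable {k y : ℝ}

theorem hasDerivAt_inv_one_add_mul_sq (h : 1 + k * y ≠ 0) :
    HasDerivAt (fun z => ((1 + k * z) ^ 2)⁻¹) (-2 * k / (1 + k * y) ^ 3) y := by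
  refine (((hasDerivAt_one_add_mul k y).fun_pow 2).fun_inv (pow_ne_zero 2 h)).congr_deriv ?_
  field_simp
  ring

theorem hasDerivAt_div_one_add_mul_cube (c : ℝ) (h : 1 + k * y ≠ 0) :
    HasDerivAt (fun z => c / (1 + k * z) ^ 3) (-3 * c * k / (1 + k * y) ^ 4) y := by
  refine ((hasDerivAt_const y c).fun_div ((hasDerivAt_one_add_mul k y).fun_pow 3)
    (pow_ne_zero 3 h)).congr_deriv ?_
  field_simp
  ring

theorem deriv_deriv_inv_one_add_mul_sq (h : 1 + k * y ≠ 0) :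
    deriv (deriv fun z => ((1 + k * z) ^ 2)⁻¹) y = 6 * k ^ 2 * (((1 + k * y) ^ 2)⁻¹) ^ 2 := by
  have hderiv :
      deriv (fun z => ((1 + k * z) ^ 2)⁻¹) =ᶠ[𝓝 y] fun z => -2 * k / (1 + k * z) ^ 3 := by
    have hopen : IsOpen {z : ℝ | 1 + k * z ≠ 0} :=
      isOpen_ne_fun (by fun_prop) continuous_const
    filter_upwards [hopen.mem_nhds h] with z hz
    exact (hasDerivAt_inv_one_add_mul_sq hz).deriv
  rw [hderiv.deriv_eq, (hasDerivAt_div_one_add_mul_cube _ h).deriv]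
  field_simp
  ring

end ExplicitSolution

section Uniqueness

variable {ψ : ℝ → ℝ} {k : ℝ}

theorem deriv_nonpos_of_deriv_deriv_eq (hd : ∀ x, 0 < x → HasDerivAt ψ (deriv ψ x) x)
    (hdd : ∀ x, 0 < x → HasDerivAt (deriv ψ) (6 * k ^ 2 * ψ x ^ 2) x)
    (hlim : Tendsto ψ atTop (𝓝 0)) {x : ℝ} (hx : 0 < x) : deriv ψ x ≤ 0 := by
  have hmono : MonotoneOn (deriv ψ) (Ioi 0) :=
    monotoneOn_of_hasDerivWithinAt_nonneg (convex_Ioi 0)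
      (fun z hz => (hdd z hz).continuousAt.continuousWithinAt)
      (fun z hz => (hdd z (by simpa using hz)).hasDerivWithinAt) (fun z _ => by positivity)
  exact nonpos_of_le_deriv_of_tendsto (fun z hz => (hd z (hx.trans_le hz)).differentiableAt)
    (fun z hz => hmono hx (hx.trans hz) hz.le) hlim

theorem exists_deriv_sq_eq_add_of_deriv_deriv_eq
    (hd : ∀ x, 0 < x → HasDerivAt ψ (deriv ψ x) x)
    (hdd : ∀ x, 0 < x → HasDerivAt (deriv ψ) (6 * k ^ 2 * ψ x ^ 2) x) :
    ∃ E, ∀ x, 0 < x → deriv ψ x ^ 2 = E + 4 * k ^ 2 * ψ x ^ 3 := by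
  have henergy : ∀ x, 0 < x →
      HasDerivAt (fun z => deriv ψ z ^ 2 - 4 * k ^ 2 * ψ z ^ 3) 0 x := fun x hx => by
    refine (((hdd x hx).fun_pow 2).sub (((hd x hx).fun_pow 3).const_mul _)).congr_deriv ?_
    ring
  obtain ⟨E, hE⟩ := isOpen_Ioi.exists_is_const_of_deriv_eq_zero isPreconnected_Ioi
    (fun x hx => (henergy x hx).differentiableAt.differentiableWithinAt)
    (fun x hx => (henergy x hx).deriv)
  exact ⟨E, fun x hx => by linarith [hE x hx]⟩

theorem deriv_sq_eq_of_deriv_deriv_eq (hd : ∀ x, 0 < x → HasDerivAt ψ (deriv ψ x) x)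
    (hdd : ∀ x, 0 < x → HasDerivAt (deriv ψ) (6 * k ^ 2 * ψ x ^ 2) x)
    (hnn : ∀ x, 0 ≤ x → 0 ≤ ψ x) (hlim : Tendsto ψ atTop (𝓝 0)) {x : ℝ} (hx : 0 < x) :
    deriv ψ x ^ 2 = 4 * k ^ 2 * ψ x ^ 3 := by
  obtain ⟨E, hE⟩ := exists_deriv_sq_eq_add_of_deriv_deriv_eq hd hdd
  have hE_nonneg : 0 ≤ E := by
    have hcubic :
        Tendsto (fun z => E + 4 * k ^ 2 * ψ z ^ 3) atTop (𝓝 (E + 4 * k ^ 2 * 0 ^ 3)) :=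
      ((hlim.pow 3).const_mul _).const_add E
    refine ge_of_tendsto (by simpa using hcubic) ?_
    filter_upwards [eventually_gt_atTop 0] with z hz
    rw [← hE z hz]
    positivity
  -- `-ψ` would grow at least like `√E · y`, which is incompatible with `ψ → 0`.
  have hE_nonpos : √E ≤ 0 := by
    refine nonpos_of_le_deriv_of_tendsto (f := fun z => -ψ z) (a := 1)
      (fun z hz => (hd z (by linarith)).differentiableAt.neg) (fun z hz => ?_) hlim.neg
    have hz0 : 0 < z := by linarith
    rw [deriv.fun_neg, ← abs_of_nonpos (deriv_nonpos_of_deriv_deriv_eq hd hdd hlim hz0),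
      ← sqrt_sq_eq_abs, hE z hz0]
    have hψz := hnn z hz0.le
    exact sqrt_le_sqrt (le_add_of_nonneg_right (by positivity))
  rw [hE x hx, le_antisymm (sqrt_eq_zero'.1 (le_antisymm hE_nonpos (sqrt_nonneg E))) hE_nonneg,
    zero_add]

theorem deriv_eq_neg_mul_sqrt_of_deriv_deriv_eq (hk : 0 ≤ k)
    (hd : ∀ x, 0 < x → HasDerivAt ψ (deriv ψ x) x)
    (hdd : ∀ x, 0 < x → HasDerivAt (deriv ψ) (6 * k ^ 2 * ψ x ^ 2) x)
    (hnn : ∀ x, 0 ≤ x → 0 ≤ ψ x) (hlim : Tendsto ψ atTop (𝓝 0)) {x : ℝ} (hx : 0 < x) :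
    deriv ψ x = -(2 * k * ψ x * √(ψ x)) := by
  have hψ := hnn x hx.le
  have habs := abs_of_nonpos (deriv_nonpos_of_deriv_deriv_eq hd hdd hlim hx)
  rw [← sqrt_sq_eq_abs, deriv_sq_eq_of_deriv_deriv_eq hd hdd hnn hlim hx,
    show 4 * k ^ 2 * ψ x ^ 3 = (2 * k * ψ x) ^ 2 * ψ x by ring,
    sqrt_mul (sq_nonneg _), sqrt_sq (by positivity)] at habs
  linarith

theorem le_one_of_deriv_deriv_eq (hc : ContinuousOn ψ (Ici 0))
    (hd : ∀ x, 0 < x → HasDerivAt ψ (deriv ψ x) x)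
    (hdd : ∀ x, 0 < x → HasDerivAt (deriv ψ) (6 * k ^ 2 * ψ x ^ 2) x)
    (hlim : Tendsto ψ atTop (𝓝 0)) (h0 : ψ 0 = 1) {x : ℝ} (hx : 0 ≤ x) : ψ x ≤ 1 := by
  have hanti : AntitoneOn ψ (Ici 0) :=
    antitoneOn_of_hasDerivWithinAt_nonpos (convex_Ici 0) hc
      (fun z hz => (hd z (by simpa using hz)).hasDerivWithinAt)
      (fun z hz => deriv_nonpos_of_deriv_deriv_eq hd hdd hlim (by simpa using hz))
  exact h0 ▸ hanti self_mem_Ici hx hx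

theorem exp_neg_mul_le_of_deriv_deriv_eq (hk : 0 ≤ k) (hc : ContinuousOn ψ (Ici 0))
    (hd : ∀ x, 0 < x → HasDerivAt ψ (deriv ψ x) x)
    (hdd : ∀ x, 0 < x → HasDerivAt (deriv ψ) (6 * k ^ 2 * ψ x ^ 2) x)
    (hnn : ∀ x, 0 ≤ x → 0 ≤ ψ x) (hlim : Tendsto ψ atTop (𝓝 0)) (h0 : ψ 0 = 1)
    {x : ℝ} (hx : 0 ≤ x) : exp (-(2 * k * x)) ≤ ψ x := by
  have hexp : ∀ z, HasDerivAt (fun z => exp (2 * k * z)) (exp (2 * k * z) * (2 * k)) z :=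
    fun z => by simpa using ((hasDerivAt_id z).const_mul (2 * k)).exp
  have hmono : MonotoneOn (fun z => ψ z * exp (2 * k * z)) (Ici 0) := by
    refine monotoneOn_of_hasDerivWithinAt_nonneg (convex_Ici 0)
      (hc.mul (by fun_prop))
      (fun z hz => ((hd z (by simpa using hz)).mul (hexp z)).hasDerivWithinAt) (fun z hz => ?_)
    have hz : 0 < z := by simpa using hz
    have hψz := hnn z hz.le
    have hsqrt : √(ψ z) ≤ 1 := sqrt_le_one.2 (le_one_of_deriv_deriv_eq hc hd hdd hlim h0 hz.le)
    have hderiv_nonneg : 0 ≤ exp (2 * k * z) * (2 * k * ψ z * (1 - √(ψ z))) := by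
      have := sub_nonneg.2 hsqrt
      positivity
    rw [deriv_eq_neg_mul_sqrt_of_deriv_deriv_eq hk hd hdd hnn hlim hz]
    linarith
  have hlower := hmono self_mem_Ici hx hx
  simp only [h0, mul_zero, exp_zero, mul_one] at hlower
  rwa [exp_neg, inv_le_iff_one_le_mul₀ (exp_pos _)]

theorem eq_inv_one_add_mul_sq_of_deriv_deriv_eq (hk : 0 ≤ k) (hc : ContinuousOn ψ (Ici 0))
    (hd : ∀ x, 0 < x → HasDerivAt ψ (deriv ψ x) x)
    (hdd : ∀ x, 0 < x → HasDerivAt (deriv ψ) (6 * k ^ 2 * ψ x ^ 2) x)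
    (hnn : ∀ x, 0 ≤ x → 0 ≤ ψ x) (hlim : Tendsto ψ atTop (𝓝 0)) (h0 : ψ 0 = 1)
    {y : ℝ} (hy : 0 ≤ y) : ψ y = ((1 + k * y) ^ 2)⁻¹ := by
  have hpos : ∀ z, 0 ≤ z → 0 < ψ z := fun z hz =>
    (exp_pos _).trans_le (exp_neg_mul_le_of_deriv_deriv_eq hk hc hd hdd hnn hlim h0 hz)
  have hsqrt_ne : ∀ z, 0 ≤ z → √(ψ z) ≠ 0 := fun z hz => (sqrt_pos.2 (hpos z hz)).ne'
  have hderiv : ∀ z, 0 < z → HasDerivAt (fun z => (√(ψ z))⁻¹) k z := fun z hz => by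
    refine (((hd z hz).sqrt (hpos z hz.le).ne').inv (hsqrt_ne z hz.le)).congr_deriv ?_
    have hψ := hpos z hz.le
    rw [deriv_eq_neg_mul_sqrt_of_deriv_deriv_eq hk hd hdd hnn hlim hz]
    field_simp
    rw [sq_sqrt hψ.le]
  rcases hy.eq_or_lt with rfl | hy
  · simp [h0]
  obtain ⟨c, hc, hslope⟩ := exists_hasDerivAt_eq_slope (fun z => (√(ψ z))⁻¹) (fun _ => k) hy
    ((hc.mono Icc_subset_Ici_self).sqrt.inv₀ fun z hz => hsqrt_ne z hz.1)
    (fun z hz => hderiv z hz.1)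
  have hlin : (√(ψ y))⁻¹ = 1 + k * y := by
    rw [h0, sqrt_one, inv_one, sub_zero, eq_div_iff hy.ne'] at hslope
    linarith
  rw [← hlin, inv_pow, inv_inv, sq_sqrt (hpos y hy.le).le]

theorem eq_inv_one_add_mul_sq_of_contDiffOn (hk : 0 ≤ k) (hnn : ∀ x, 0 ≤ x → 0 ≤ ψ x)
    (hC2 : ContDiffOn ℝ 2 ψ (Ici 0))
    (hode : ∀ x, 0 < x → deriv (deriv ψ) x = 6 * k ^ 2 * ψ x ^ 2) (h0 : ψ 0 = 1)
    (hlim : Tendsto ψ atTop (𝓝 0)) {y : ℝ} (hy : 0 ≤ y) : ψ y = ((1 + k * y) ^ 2)⁻¹ := by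
  have hC2' : ContDiffOn ℝ 2 ψ (Ioi 0) := hC2.mono Ioi_subset_Ici_self
  have hd : ∀ x, 0 < x → HasDerivAt ψ (deriv ψ x) x := fun x hx =>
    ((hC2'.contDiffAt (isOpen_Ioi.mem_nhds hx)).differentiableAt (by norm_num)).hasDerivAt
  have hdd : ∀ x, 0 < x → HasDerivAt (deriv ψ) (6 * k ^ 2 * ψ x ^ 2) x := fun x hx =>
    hode x hx ▸ (((hC2'.deriv_of_isOpen isOpen_Ioi (m := 1) (by norm_num)).contDiffAt
      (isOpen_Ioi.mem_nhds hx)).differentiableAt (by norm_num)).hasDerivAt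
  exact eq_inv_one_add_mul_sq_of_deriv_deriv_eq hk hC2.continuousOn hd hdd hnn hlim h0 hy

end Uniqueness

/-- for `σ, η > 0`, the function `φ(y) = (1 + σy/(√6 η))⁻²` is the
unique bounded, nonnegative, twice continuously differentiable solution on `[0,∞)` of
`φ'' = (σ²/η²) φ²` with `φ(0) = 1` and `φ(y) → 0` as `y → ∞`. -/
theorem fleischman_sawyer_ode_unique (σ η : ℝ) (hσ : 0 < σ) (hη : 0 < η) :
    (∃ C : ℝ, ∀ y : ℝ, 0 ≤ y →
        |((1 + σ * y / (Real.sqrt 6 * η)) ^ 2)⁻¹| ≤ C)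
    ∧ (∀ y : ℝ, 0 ≤ y → 0 ≤ ((1 + σ * y / (Real.sqrt 6 * η)) ^ 2)⁻¹)
    ∧ ContDiffOn ℝ 2 (fun y : ℝ => ((1 + σ * y / (Real.sqrt 6 * η)) ^ 2)⁻¹) (Set.Ici 0)
    ∧ (∀ y : ℝ, 0 < y →
        deriv (deriv (fun z : ℝ => ((1 + σ * z / (Real.sqrt 6 * η)) ^ 2)⁻¹)) y
          = (σ ^ 2 / η ^ 2) * (((1 + σ * y / (Real.sqrt 6 * η)) ^ 2)⁻¹) ^ 2)
    ∧ ((1 + σ * (0 : ℝ) / (Real.sqrt 6 * η)) ^ 2)⁻¹ = 1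
    ∧ Tendsto (fun y : ℝ => ((1 + σ * y / (Real.sqrt 6 * η)) ^ 2)⁻¹) atTop (nhds 0)
    ∧ ∀ ψ : ℝ → ℝ,
        (∃ C : ℝ, ∀ y : ℝ, 0 ≤ y → |ψ y| ≤ C) →
        (∀ y : ℝ, 0 ≤ y → 0 ≤ ψ y) →
        ContDiffOn ℝ 2 ψ (Set.Ici 0) →
        (∀ y : ℝ, 0 < y → deriv (deriv ψ) y = (σ ^ 2 / η ^ 2) * (ψ y) ^ 2) →
        ψ 0 = 1 →
        Tendsto ψ atTop (nhds 0) →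
        ∀ y : ℝ, 0 ≤ y → ψ y = ((1 + σ * y / (Real.sqrt 6 * η)) ^ 2)⁻¹ := by
  set k := σ / (√6 * η) with hk_def
  have hk : 0 < k := by positivity
  have hlin : ∀ y, σ * y / (√6 * η) = k * y := fun y => by rw [hk_def]; ring
  have hcoef : σ ^ 2 / η ^ 2 = 6 * k ^ 2 := by
    rw [hk_def, div_pow, mul_pow, sq_sqrt (by norm_num : (0 : ℝ) ≤ 6)]
    field_simp
  have hpos : ∀ y, 0 ≤ y → 0 < 1 + k * y := fun y hy => by positivity
  simp only [hlin, hcoef]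
  refine ⟨⟨1, fun y hy => ?_⟩, fun y _ => by positivity, ?_,
    fun y hy => deriv_deriv_inv_one_add_mul_sq (hpos y hy.le).ne', by norm_num, ?_,
    fun ψ _ hnn hC2 hode h0 hlim y hy =>
      eq_inv_one_add_mul_sq_of_contDiffOn hk.le hnn hC2 hode h0 hlim hy⟩
  · rw [abs_of_nonneg (by positivity)]
    exact inv_le_one_of_one_le₀ (one_le_pow₀ (le_add_of_nonneg_right (by positivity)))
  · exact ContDiffOn.inv (by fun_prop) fun y hy => (pow_pos (hpos y hy) 2).ne'
  · exact ((tendsto_pow_atTop two_ne_zero).comp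
      (tendsto_atTop_add_const_left _ 1 (tendsto_id.const_mul_atTop hk))).inv_tendsto_atTop
end

section
/- Let u : ℤ → ℝ be non-increasing with 0 < u(x) ≤ 1 for all x and lim_{x→∞} u(x) = 0, extended to real arguments by u(x) := u(⌊x⌋), and let β > 0. If lim_{x→∞} u(x + y/√(u(x)))/u(x) = (1 + β·y)^{−2} uniformly for y in compact subsets of [0,∞), then lim_{x→∞} x²·u(x) = 1/β². -/
open Filter Real Set MeasureTheory ProbabilityTheory
open Topology

private lemma le_of_sq_le' {a b : ℝ} (hb : 0 ≤ b) (h : a^2 ≤ b^2) : a ≤ b := by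
  nlinarith [sq_nonneg (a + b), sq_nonneg (a - b)]

private noncomputable def aseq (g : ℝ → ℝ) (Y A : ℝ) : ℕ → ℝ
  | 0 => A
  | n+1 => aseq g Y A n + Y / Real.sqrt (g (aseq g Y A n))

private lemma chaining (g : ℝ → ℝ) (Y : ℝ) (hY : 0 < Y)
    (hgpos : ∀ x, 0 < g x) (hgle : ∀ x, g x ≤ 1) (hganti : Antitone g)
    (X₀ : ℝ) (H : ∀ x, X₀ ≤ x → |g (x + Y / Real.sqrt (g x)) / g x - 4⁻¹| < 8⁻¹) :
    ∃ C X : ℝ, ∀ t, X ≤ t → Y^2/144 ≤ t^2 * g t ∧ t^2 * g t ≤ C := by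
  have hp : ∀ x : ℝ, 0 < Real.sqrt (g x) := fun x => Real.sqrt_pos.2 (hgpos x)
  have hp1 : ∀ x : ℝ, Real.sqrt (g x) ≤ 1 := fun x => Real.sqrt_le_one.2 (hgle x)
  have hpsq : ∀ x : ℝ, Real.sqrt (g x) ^ 2 = g x := fun x => Real.sq_sqrt (hgpos x).le
  set A := max X₀ 1 with hA
  set a : ℕ → ℝ := aseq g Y A with ha
  have haS : ∀ n, a (n+1) = a n + Y / Real.sqrt (g (a n)) := fun n => rfl
  have hstep : ∀ n, Y ≤ Y / Real.sqrt (g (a n)) := by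
    intro n
    rw [le_div_iff₀ (hp _)]
    nlinarith [hp1 (a n), hp (a n)]
  have hstep' : ∀ n, a n + Y ≤ a (n+1) := by
    intro n; rw [haS]; linarith [hstep n]
  have haA : ∀ n, A ≤ a n := by
    intro n; induction n with
    | zero => exact le_refl _
    | succ n ih => linarith [hstep' n]
  have haX : ∀ n, X₀ ≤ a n := fun n => le_trans (le_max_left _ _) (haA n)
  have ha1 : ∀ n, 1 ≤ a n := fun n => le_trans (le_max_right _ _) (haA n)
  have hapos : ∀ n, 0 < a n := fun n => lt_of_lt_of_le one_pos (ha1 n)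
  have hgU : ∀ n, g (a (n+1)) < 3/8 * g (a n) := by
    intro n
    have h := H (a n) (haX n)
    rw [← haS] at h
    have h2 := (abs_lt.1 h).2
    have := (div_lt_iff₀ (hgpos (a n))).1 (by linarith : g (a (n+1)) / g (a n) < 3/8)
    linarith [this]
  have hgL : ∀ n, 8⁻¹ * g (a n) < g (a (n+1)) := by
    intro n
    have h := H (a n) (haX n)
    rw [← haS] at h
    have h2 := (abs_lt.1 h).1
    have : (8:ℝ)⁻¹ < g (a (n+1)) / g (a n) := by linarith
    have := (lt_div_iff₀ (hgpos (a n))).1 this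
    linarith
  have hpU : ∀ n, Real.sqrt (g (a (n+1))) ≤ 5/8 * Real.sqrt (g (a n)) := by
    intro n
    apply le_of_sq_le' (by positivity)
    rw [mul_pow, hpsq, hpsq]
    nlinarith [hgU n, hgpos (a n)]
  have hpL : ∀ n, 1/3 * Real.sqrt (g (a n)) ≤ Real.sqrt (g (a (n+1))) := by
    intro n
    apply le_of_sq_le' (hp _).le
    rw [mul_pow, hpsq, hpsq]
    nlinarith [hgL n, hgpos (a n)]
  set q : ℕ → ℝ := fun n => a n * Real.sqrt (g (a n)) with hq
  have hqpos : ∀ n, 0 < q n := fun n => mul_pos (hapos n) (hp _)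
  have hqlb : ∀ n, Y/3 ≤ q (n+1) := by
    intro n
    have h1 : Y / Real.sqrt (g (a n)) ≤ a (n+1) := by
      rw [haS]; linarith [(hapos n)]
    have h2 : 1/3 * Real.sqrt (g (a n)) ≤ Real.sqrt (g (a (n+1))) := hpL n
    have h3 : (Y / Real.sqrt (g (a n))) * (1/3 * Real.sqrt (g (a n))) ≤ q (n+1) := by
      apply mul_le_mul h1 h2 (by positivity) (by linarith [hapos (n+1)])
    have h4 : (Y / Real.sqrt (g (a n))) * (1/3 * Real.sqrt (g (a n))) = Y/3 := by
      have hne : Real.sqrt (g (a n)) ≠ 0 := (hp _).ne'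
      have h5 : (Y / Real.sqrt (g (a n))) * (1/3 * Real.sqrt (g (a n)))
          = Y/3 * (Real.sqrt (g (a n)) / Real.sqrt (g (a n))) := by ring
      rw [h5, div_self hne, mul_one]
    linarith [h3, h4.symm.le]
  set M : ℝ := max (q 1) (5/3 * Y) with hM
  have hMY : 5/3 * Y ≤ M := le_max_right _ _
  have hqub : ∀ n, 1 ≤ n → q n ≤ M := by
    intro n hn
    induction n, hn using Nat.le_induction with
    | base => exact le_max_left _ _
    | succ n hn ih =>
      have h1 : a (n+1) ≤ a n + Y / Real.sqrt (g (a n)) := (haS n).le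
      have h2 : q (n+1) ≤ (a n + Y / Real.sqrt (g (a n))) * (5/8 * Real.sqrt (g (a n))) := by
        apply mul_le_mul h1 (hpU n) (hp _).le
        have := hapos n
        have := div_pos hY (hp (a n))
        linarith
      have h3 : (a n + Y / Real.sqrt (g (a n))) * (5/8 * Real.sqrt (g (a n)))
          = 5/8 * (q n + Y) := by
        have hne : Real.sqrt (g (a n)) ≠ 0 := (hp _).ne'
        have h6 : (a n + Y / Real.sqrt (g (a n))) * (5/8 * Real.sqrt (g (a n)))
            = 5/8 * (a n * Real.sqrt (g (a n))) + 5/8 * Y * (Real.sqrt (g (a n)) / Real.sqrt (g (a n))) := by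
          ring
        rw [h6, div_self hne, hq]
        ring
      have h4 : q n ≤ M := ih
      have h5 : 5/8 * (q n + Y) ≤ M := by
        linarith [hMY, h4]
      linarith [h2, h3.le]
  -- coverage
  have hgrow : ∀ n : ℕ, A + n * Y ≤ a n := by
    intro n; induction n with
    | zero =>
      have h0 : a 0 = A := rfl
      simp [h0]
    | succ n ih =>
      have := hstep' n
      push_cast
      push_cast at ih
      linarith
  have hex : ∀ t : ℝ, ∃ k : ℕ, t < a k := by
    intro t
    obtain ⟨k, hk⟩ := exists_nat_gt ((t - A)/Y)
    refine ⟨k, ?_⟩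
    have : t - A < k * Y := by
      rw [div_lt_iff₀ hY] at hk
      linarith
    linarith [hgrow k]
  refine ⟨16 * M^2, a 1, ?_⟩
  intro t htl
  have hexx := hex t
  set K := Nat.find hexx with hK
  have hKs : t < a K := Nat.find_spec hexx
  have hK0 : ¬ t < a 0 := not_lt.2 (le_trans (by linarith [hstep' 0]) htl)
  have hK1 : ¬ t < a 1 := not_lt.2 htl
  have hK2 : 2 ≤ K := by
    by_contra h
    interval_cases K
    · exact hK0 hKs
    · exact hK1 hKs
  set n := K - 1 with hn
  have hn1 : 1 ≤ n := by omega
  have hnK : n + 1 = K := by omega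
  have han : a n ≤ t := not_lt.1 (Nat.find_min hexx (by omega))
  have hat : t < a (n+1) := by rw [hnK]; exact hKs
  obtain ⟨m', hm'⟩ : ∃ m', n = m' + 1 := ⟨n - 1, by omega⟩
  have hqn : Y/3 ≤ q n := by rw [hm']; exact hqlb m'
  have hqn1 : Y/3 ≤ q (n+1) := hqlb n
  have hqnM : q n ≤ M := hqub n hn1
  have hstep_bound : a (n+1) ≤ 4 * a n := by
    have h1 : Y / Real.sqrt (g (a n)) ≤ 3 * a n := by
      rw [div_le_iff₀ (hp _)]
      have : 3 * a n * Real.sqrt (g (a n)) = 3 * q n := by rw [hq]; ring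
      rw [this]; linarith
    rw [haS]; linarith
  have ht0 : 0 < t := lt_of_lt_of_le (hapos 1) htl
  constructor
  · -- lower bound
    have h1 : a n ^ 2 * g (a (n+1)) ≤ t^2 * g t := by
      apply mul_le_mul _ (hganti hat.le) (hgpos _).le (sq_nonneg t)
      nlinarith [hapos n, han]
    have h2 : a n ^ 2 * g (a (n+1)) = (a n * Real.sqrt (g (a (n+1))))^2 := by
      rw [mul_pow, hpsq]
    have h3 : Y/12 ≤ a n * Real.sqrt (g (a (n+1))) := by
      have h4 : a (n+1) / 4 * Real.sqrt (g (a (n+1))) ≤ a n * Real.sqrt (g (a (n+1))) := by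
        apply mul_le_mul_of_nonneg_right (by linarith) (hp _).le
      have h5 : a (n+1) / 4 * Real.sqrt (g (a (n+1))) = q (n+1) / 4 := by rw [hq]; ring
      rw [h5] at h4
      linarith
    have h6 : (Y/12)^2 ≤ (a n * Real.sqrt (g (a (n+1))))^2 := by
      apply pow_le_pow_left₀ (by positivity) h3
    calc Y^2/144 = (Y/12)^2 := by ring
    _ ≤ (a n * Real.sqrt (g (a (n+1))))^2 := h6
    _ = a n ^ 2 * g (a (n+1)) := h2.symm
    _ ≤ t^2 * g t := h1
  · -- upper bound
    have h1 : t^2 * g t ≤ a (n+1)^2 * g (a n) := by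
      apply mul_le_mul _ (hganti han) (hgpos _).le (sq_nonneg _)
      nlinarith [ht0]
    have h2 : a (n+1)^2 * g (a n) ≤ (4 * a n)^2 * g (a n) := by
      apply mul_le_mul_of_nonneg_right _ (hgpos _).le
      nlinarith [hapos (n+1), hapos n]
    have h3 : (4 * a n)^2 * g (a n) = 16 * (q n)^2 := by
      rw [hq]; rw [mul_pow, mul_pow, hpsq]; ring
    have h4 : (q n)^2 ≤ M^2 := by
      apply pow_le_pow_left₀ (hqpos n).le hqnM
    linarith

private lemma seq_extract (S : ℝ → ℝ) (v : ℝ)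
    (h : ∀ ε : ℝ, 0 < ε → ∃ᶠ x in atTop, |S x - v| < ε) :
    ∃ t : ℕ → ℝ, Tendsto t atTop atTop ∧ Tendsto (fun k => S (t k)) atTop (𝓝 v) := by
  have hch : ∀ k : ℕ, ∃ x : ℝ, (k:ℝ) ≤ x ∧ |S x - v| < 1/(k+1) := by
    intro k
    have h1 := h (1/(k+1)) (by positivity)
    obtain ⟨x, hx1, hx2⟩ := (h1.and_eventually (eventually_ge_atTop (k:ℝ))).exists
    exact ⟨x, hx2, hx1⟩
  choose t ht1 ht2 using hch
  refine ⟨t, tendsto_atTop_mono ht1 tendsto_natCast_atTop_atTop, ?_⟩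
  rw [Metric.tendsto_atTop]
  intro ε hε
  obtain ⟨N, hN⟩ := exists_nat_one_div_lt hε
  refine ⟨N, fun n hn => ?_⟩
  rw [Real.dist_eq]
  have hc : 1/((n:ℝ)+1) ≤ 1/((N:ℝ)+1) := by
    apply one_div_le_one_div_of_le (by positivity)
    exact_mod_cast by omega
  calc |S (t n) - v| < 1/((n:ℝ)+1) := ht2 n
  _ ≤ 1/((N:ℝ)+1) := hc
  _ < ε := hN

set_option maxHeartbeats 1000000 in
private lemma key_tendsto (g : ℝ → ℝ) (β : ℝ) (hβ : 0 < β)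
    (hgpos : ∀ x, 0 < g x) (hganti : Antitone g)
    (huc : ∀ Z : ℝ, 0 ≤ Z → ∀ ε : ℝ, 0 < ε → ∃ X' : ℝ, ∀ x, X' ≤ x → ∀ z ∈ Icc (0:ℝ) Z,
      |g (x + z / Real.sqrt (g x)) / g x - ((1 + β * z) ^ 2)⁻¹| < ε)
    (c C X : ℝ) (hc : 0 < c) (hC : 0 < C)
    (hbound : ∀ t, X ≤ t → c ≤ t^2 * g t ∧ t^2 * g t ≤ C)
    (y : ℝ) (hy0 : 0 < y) (hyc : 2 * y ≤ Real.sqrt c) (hyb : 2 * (β * y) ≤ 1)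
    (v : ℝ) (t : ℕ → ℝ) (ht : Tendsto t atTop atTop)
    (hS : Tendsto (fun k => (t k)^2 * g (t k)) atTop (𝓝 v)) :
    ∃ x : ℕ → ℝ, Tendsto x atTop atTop ∧
      Tendsto (fun k => (x k)^2 * g (x k)) atTop
        (𝓝 (((Real.sqrt v - y) / (1 - β * y))^2)) := by
  have hp : ∀ s : ℝ, 0 < Real.sqrt (g s) := fun s => Real.sqrt_pos.2 (hgpos s)
  have hpsq : ∀ s : ℝ, Real.sqrt (g s) ^ 2 = g s := fun s => Real.sq_sqrt (hgpos s).le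
  obtain ⟨x, hxdef⟩ : ∃ x : ℕ → ℝ, ∀ k, x k = t k - y / Real.sqrt (g (t k)) :=
    ⟨_, fun k => rfl⟩
  have hx_ge : ∀ᶠ k in atTop, t k / 2 ≤ x k := by
    filter_upwards [ht.eventually_ge_atTop X, ht.eventually_ge_atTop 1] with k hX h1
    have h0 : (0:ℝ) < t k := lt_of_lt_of_le one_pos h1
    have hpt := hp (t k)
    have hT2 : c ≤ (t k * Real.sqrt (g (t k)))^2 := by
      rw [mul_pow, hpsq]; exact (hbound _ hX).1
    have hT0 : 0 ≤ t k * Real.sqrt (g (t k)) := by positivity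
    have hTc : Real.sqrt c ≤ t k * Real.sqrt (g (t k)) := by
      calc Real.sqrt c ≤ Real.sqrt ((t k * Real.sqrt (g (t k)))^2) := Real.sqrt_le_sqrt hT2
      _ = t k * Real.sqrt (g (t k)) := Real.sqrt_sq hT0
    have hyd : y / Real.sqrt (g (t k)) ≤ t k / 2 := by
      rw [div_le_div_iff₀ hpt two_pos]
      linarith
    rw [hxdef k]
    linarith
  have hx_to : Tendsto x atTop atTop :=
    tendsto_atTop_mono' atTop hx_ge (ht.atTop_div_const two_pos)
  have hxle : ∀ k, x k ≤ t k := by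
    intro k
    have := div_pos hy0 (hp (t k))
    rw [hxdef k]
    linarith
  have hwsum : Tendsto (fun k => Real.sqrt (g (t k)) / Real.sqrt (g (x k)) + β * y)
      atTop (𝓝 1) := by
    rw [Metric.tendsto_atTop]
    intro ε hε
    obtain ⟨w₀, hw₀def⟩ : ∃ w₀ : ℝ, w₀ = Real.sqrt (c/(4*C)) := ⟨_, rfl⟩
    have hw₀0 : 0 < w₀ := hw₀def ▸ Real.sqrt_pos.2 (by positivity)
    obtain ⟨Z, hZdef⟩ : ∃ Z : ℝ, Z = y / w₀ := ⟨_, rfl⟩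
    have hZ0 : 0 < Z := hZdef ▸ div_pos hy0 hw₀0
    have hZb : (0:ℝ) < 1 + β * Z := by positivity
    obtain ⟨ε', hε'def⟩ : ∃ e : ℝ, e = ε / (2 * (1 + β*Z)^2) := ⟨_, rfl⟩
    have hε'0 : 0 < ε' := hε'def ▸ by positivity
    obtain ⟨X', hX'⟩ := huc Z hZ0.le ε' hε'0
    have hEV : ∀ᶠ k in atTop, X ≤ t k ∧ 1 ≤ t k ∧ X ≤ x k ∧ 1 ≤ x k ∧ t k/2 ≤ x k ∧ X' ≤ x k := by
      filter_upwards [ht.eventually_ge_atTop X, ht.eventually_ge_atTop 1,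
        hx_to.eventually_ge_atTop X, hx_to.eventually_ge_atTop 1, hx_ge,
        hx_to.eventually_ge_atTop X'] with k h1 h2 h3 h4 h5 h6
      exact ⟨h1, h2, h3, h4, h5, h6⟩
    rw [eventually_atTop] at hEV
    obtain ⟨N, hN⟩ := hEV
    refine ⟨N, fun k hk => ?_⟩
    obtain ⟨htX, ht1, hxX, hx1, hxh, hxX'⟩ := hN k hk
    have hpt := hp (t k)
    have hpx := hp (x k)
    have ht0 : (0:ℝ) < t k := by linarith
    have hx0 : (0:ℝ) < x k := by linarith
    have hgtx : g (t k) ≤ g (x k) := hganti (hxle k)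
    have hptpx : Real.sqrt (g (t k)) ≤ Real.sqrt (g (x k)) := Real.sqrt_le_sqrt hgtx
    obtain ⟨w, hwdef⟩ : ∃ w : ℝ, w = Real.sqrt (g (t k)) / Real.sqrt (g (x k)) := ⟨_, rfl⟩
    have hw0 : 0 < w := hwdef ▸ div_pos hpt hpx
    have hwsq : w^2 = g (t k) / g (x k) := by
      rw [hwdef, div_pow, hpsq, hpsq]
    have hSt := hbound _ htX
    have hSx := hbound _ hxX
    have hw₀w : w₀ ≤ w := by
      apply le_of_sq_le' hw0.le
      rw [hwsq, hw₀def, Real.sq_sqrt (by positivity : (0:ℝ) ≤ c/(4*C))]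
      rw [div_le_div_iff₀ (by positivity) (hgpos _)]
      have h1 : c ≤ t k^2 * g (t k) := hSt.1
      have h2 : x k^2 * g (x k) ≤ C := hSx.2
      have h4 : t k^2 ≤ 4 * x k^2 := by
        nlinarith [mul_nonneg (by linarith : (0:ℝ) ≤ 2*x k - t k)
          (by linarith : (0:ℝ) ≤ 2*x k + t k)]
      calc c * g (x k) ≤ (t k^2 * g (t k)) * g (x k) :=
            mul_le_mul_of_nonneg_right h1 (hgpos _).le
      _ = g (t k) * (t k^2 * g (x k)) := by ring
      _ ≤ g (t k) * (4 * x k^2 * g (x k)) := by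
            apply mul_le_mul_of_nonneg_left _ (hgpos _).le
            nlinarith [(hgpos (x k)).le]
      _ = g (t k) * (4 * (x k^2 * g (x k))) := by ring
      _ ≤ g (t k) * (4 * C) := by
            apply mul_le_mul_of_nonneg_left _ (hgpos _).le
            linarith
    obtain ⟨z, hzdef⟩ : ∃ z : ℝ, z = y / w := ⟨_, rfl⟩
    have hz0 : 0 ≤ z := hzdef ▸ (div_pos hy0 hw0).le
    have hzZ : z ≤ Z := by
      rw [hzdef, hZdef]
      gcongr
    have hxeq : x k + z / Real.sqrt (g (x k)) = t k := by
      have h5 : z / Real.sqrt (g (x k)) = y / Real.sqrt (g (t k)) := by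
        rw [hzdef, hwdef, div_div_eq_mul_div, div_div,
          mul_div_mul_right _ _ hpx.ne']
      rw [h5, hxdef k]
      ring
    have happ := hX' (x k) hxX' z ⟨hz0, hzZ⟩
    rw [hxeq] at happ
    have hwz : w * (1 + β * z) = w + β * y := by
      have h5 : w * (1 + β * (y/w)) = w + β * ((y/w) * w) := by ring
      rw [hzdef, h5, div_mul_cancel₀ _ hw0.ne']
    have h1z : (0:ℝ) < 1 + β * z := by positivity
    have hsq1 : (w + β*y)^2 = (1+β*z)^2 * (g (t k) / g (x k)) := by
      rw [← hwz, mul_pow, hwsq]; ring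
    have he1 : (w + β*y)^2 - 1 = (1+β*z)^2 * (g (t k)/g (x k) - ((1+β*z)^2)⁻¹) := by
      rw [mul_sub, ← hsq1, mul_inv_cancel₀ (by positivity : ((1+β*z)^2) ≠ 0)]
    have hb1 : (1+β*z)^2 ≤ (1+β*Z)^2 := by
      have h6 : β * z ≤ β * Z := mul_le_mul_of_nonneg_left hzZ hβ.le
      have h7 : 1 + β*z ≤ 1 + β*Z := by linarith
      exact pow_le_pow_left₀ h1z.le h7 2
    have hkey : |(w + β*y)^2 - 1| ≤ (1+β*Z)^2 * ε' := by
      rw [he1, abs_mul, abs_of_pos (pow_pos h1z 2)]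
      apply mul_le_mul hb1 happ.le (abs_nonneg _) (by positivity)
    have ha0 : 0 < w + β*y := by positivity
    have habs : |w + β*y - 1| ≤ |(w+β*y)^2 - 1| := by
      have h2 : |w+β*y-1| * (w+β*y+1) = |(w+β*y)^2 - 1| := by
        rw [← abs_of_pos (show (0:ℝ) < w+β*y+1 by linarith), ← abs_mul]
        ring_nf
      have h8 : (1:ℝ) ≤ w+β*y+1 := by linarith
      calc |w+β*y-1| = |w+β*y-1| * 1 := (mul_one _).symm
      _ ≤ |w+β*y-1| * (w+β*y+1) := mul_le_mul_of_nonneg_left h8 (abs_nonneg _)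
      _ = |(w+β*y)^2-1| := h2
    have hfin : (1+β*Z)^2 * ε' = ε/2 := by
      rw [hε'def]
      field_simp
    rw [Real.dist_eq, ← hwdef]
    calc |w + β*y - 1| ≤ |(w+β*y)^2 - 1| := habs
    _ ≤ (1+β*Z)^2 * ε' := hkey
    _ = ε/2 := hfin
    _ < ε := half_lt_self hε
  have hden : (0:ℝ) < 1 - β * y := by linarith
  have hw_to : Tendsto (fun k => Real.sqrt (g (t k)) / Real.sqrt (g (x k)))
      atTop (𝓝 (1 - β * y)) := by
    have h2 := hwsum.sub_const (β * y)
    have h3 : (fun k => (Real.sqrt (g (t k)) / Real.sqrt (g (x k)) + β * y) - β * y)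
        = (fun k => Real.sqrt (g (t k)) / Real.sqrt (g (x k))) := by
      funext k; ring
    rw [h3] at h2
    exact h2
  have hT_to : Tendsto (fun k => t k * Real.sqrt (g (t k))) atTop (𝓝 (Real.sqrt v)) := by
    have h1 : Tendsto (fun k => Real.sqrt ((t k)^2 * g (t k))) atTop (𝓝 (Real.sqrt v)) :=
      (Real.continuous_sqrt.tendsto v).comp hS
    apply h1.congr'
    filter_upwards [ht.eventually_ge_atTop 1] with k h1k
    rw [Real.sqrt_mul (sq_nonneg _), Real.sqrt_sq (by linarith : (0:ℝ) ≤ t k)]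
  have hXs : Tendsto (fun k => x k * Real.sqrt (g (x k))) atTop
      (𝓝 ((Real.sqrt v - y)/(1 - β * y))) := by
    have h2 := (hT_to.sub_const y).div hw_to hden.ne'
    apply h2.congr'
    filter_upwards [ht.eventually_ge_atTop 1] with k h1k
    have hpt := hp (t k)
    have hpx := hp (x k)
    show (t k * Real.sqrt (g (t k)) - y) / (Real.sqrt (g (t k)) / Real.sqrt (g (x k)))
        = x k * Real.sqrt (g (x k))
    rw [hxdef k]
    field_simp
  refine ⟨x, hx_to, ?_⟩
  have h3 := hXs.pow 2
  apply h3.congr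
  intro k
  rw [mul_pow, hpsq]

/-- if `u : ℤ → ℝ` is non-increasing with values in `(0,1]`,
tends to `0` at `+∞`, and satisfies the uniform scaling relation
`u(x + y/√u(x))/u(x) → (1 + βy)⁻²` (uniformly on compact subsets of `[0,∞)`),
then `x² u(x) → 1/β²` as `x → ∞`. -/
theorem tail_asymptotics_from_scaling
    (u : ℤ → ℝ) (β : ℝ) (hβ : 0 < β)
    (humono : Antitone u)
    (hupos : ∀ x : ℤ, 0 < u x)
    (hule : ∀ x : ℤ, u x ≤ 1)
    (hulim : Tendsto u atTop (nhds 0))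
    (hunif : ∀ K : Set ℝ, IsCompact K → K ⊆ Set.Ici 0 →
      TendstoUniformlyOn
        (fun (x : ℝ) (z : ℝ) => u ⌊x + z / Real.sqrt (u ⌊x⌋)⌋ / u ⌊x⌋)
        (fun z : ℝ => ((1 + β * z) ^ 2)⁻¹) atTop K) :
    Tendsto (fun x : ℝ => x ^ 2 * u ⌊x⌋) atTop (nhds (1 / β ^ 2)) := by
  obtain ⟨g, hgdef⟩ : ∃ g : ℝ → ℝ, ∀ x, g x = u ⌊x⌋ := ⟨_, fun _ => rfl⟩
  have hgoal : (fun x : ℝ => x ^ 2 * u ⌊x⌋) = fun x => x ^ 2 * g x := by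
    funext x; rw [hgdef]
  rw [hgoal]
  have hgpos : ∀ x : ℝ, 0 < g x := fun x => (hgdef x) ▸ hupos _
  have hgle : ∀ x : ℝ, g x ≤ 1 := fun x => (hgdef x) ▸ hule _
  have hganti : Antitone g := by
    intro x₁ x₂ h
    rw [hgdef, hgdef]
    exact humono (Int.floor_le_floor h)
  have huc : ∀ Z : ℝ, 0 ≤ Z → ∀ ε : ℝ, 0 < ε → ∃ X' : ℝ, ∀ x, X' ≤ x → ∀ z ∈ Icc (0:ℝ) Z,
      |g (x + z / Real.sqrt (g x)) / g x - ((1 + β * z) ^ 2)⁻¹| < ε := by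
    intro Z hZ ε hε
    have h := hunif (Icc 0 Z) isCompact_Icc (fun z hz => hz.1)
    rw [Metric.tendstoUniformlyOn_iff] at h
    have h2 := h ε hε
    rw [eventually_atTop] at h2
    obtain ⟨X', hX'⟩ := h2
    refine ⟨X', fun x hx z hz => ?_⟩
    have h3 := hX' x hx z hz
    rw [Real.dist_eq, abs_sub_comm] at h3
    have h4 : g (x + z / Real.sqrt (g x)) = u ⌊x + z / Real.sqrt (u ⌊x⌋)⌋ := by
      rw [hgdef, hgdef]
    rw [h4, hgdef]
    exact h3
  -- chaining bounds
  have hY : 0 < 1/β := by positivity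
  obtain ⟨X₁, H1⟩ : ∃ X₁ : ℝ, ∀ x, X₁ ≤ x →
      |g (x + (1/β) / Real.sqrt (g x)) / g x - 4⁻¹| < 8⁻¹ := by
    obtain ⟨X', h⟩ := huc (1/β) hY.le 8⁻¹ (by norm_num)
    refine ⟨X', fun x hx => ?_⟩
    have h2 := h x hx (1/β) ⟨hY.le, le_refl _⟩
    have h3 : ((1 + β * (1/β)) ^ 2)⁻¹ = (4:ℝ)⁻¹ := by
      rw [mul_one_div, div_self hβ.ne']
      norm_num
    rw [h3] at h2
    exact h2
  obtain ⟨C, X, hbound⟩ := chaining g (1/β) hY hgpos hgle hganti X₁ H1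
  obtain ⟨c, hcdef⟩ : ∃ c : ℝ, c = (1/β)^2/144 := ⟨_, rfl⟩
  have hc0 : 0 < c := hcdef ▸ by positivity
  have hbound' : ∀ t, X ≤ t → c ≤ t^2 * g t ∧ t^2 * g t ≤ C := by
    intro t htX
    rw [hcdef]
    exact hbound t htX
  have hC0 : 0 < C := by
    have h := hbound' (max X 1) (le_max_left _ _)
    linarith [h.1, h.2]
  obtain ⟨S, hSdef⟩ : ∃ S : ℝ → ℝ, ∀ x, S x = x^2 * g x := ⟨_, fun _ => rfl⟩
  have hgoal2 : (fun x : ℝ => x ^ 2 * g x) = S := by funext x; rw [hSdef]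
  rw [hgoal2]
  have hev_ub : ∀ᶠ x : ℝ in atTop, S x ≤ C := by
    rw [eventually_atTop]
    exact ⟨X, fun b hb => (hSdef b) ▸ (hbound' b hb).2⟩
  have hev_lb : ∀ᶠ x : ℝ in atTop, c ≤ S x := by
    rw [eventually_atTop]
    exact ⟨X, fun b hb => (hSdef b) ▸ (hbound' b hb).1⟩
  have hbu : IsBoundedUnder (· ≤ ·) atTop S := ⟨C, by simpa [eventually_map] using hev_ub⟩
  have hbl : IsBoundedUnder (· ≥ ·) atTop S := ⟨c, by simpa [eventually_map] using hev_lb⟩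
  have hcob_ge : IsCoboundedUnder (· ≥ ·) atTop S := hbu.isCoboundedUnder_flip
  have hcob_le : IsCoboundedUnder (· ≤ ·) atTop S := hbl.isCoboundedUnder_flip
  set l := liminf S atTop with hl
  set L := limsup S atTop with hL
  have hcl : c ≤ l := le_liminf_of_le hcob_ge hev_lb
  have hLC : L ≤ C := limsup_le_of_le hcob_le hev_ub
  have hlL : l ≤ L := liminf_le_limsup hbu hbl
  have hl0 : 0 ≤ l := le_trans hc0.le hcl
  have hL0 : 0 ≤ L := le_trans hl0 hlL
  -- extremal sequences
  have hfreq_l : ∀ ε : ℝ, 0 < ε → ∃ᶠ x in atTop, |S x - l| < ε := by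
    intro ε hε
    have h1 : ∀ᶠ x in atTop, l - ε < S x :=
      eventually_lt_of_lt_liminf (by linarith) hbl
    have h2 : ∃ᶠ x in atTop, S x < l + ε :=
      frequently_lt_of_liminf_lt hcob_ge (by linarith)
    apply (h2.and_eventually h1).mono
    rintro x ⟨ha, hb⟩
    rw [abs_lt]
    constructor <;> linarith
  have hfreq_L : ∀ ε : ℝ, 0 < ε → ∃ᶠ x in atTop, |S x - L| < ε := by
    intro ε hε
    have h1 : ∀ᶠ x in atTop, S x < L + ε :=
      eventually_lt_of_limsup_lt (by linarith) hbu
    have h2 : ∃ᶠ x in atTop, L - ε < S x :=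
      frequently_lt_of_lt_limsup hcob_le (by linarith)
    apply (h2.and_eventually h1).mono
    rintro x ⟨ha, hb⟩
    rw [abs_lt]
    constructor <;> linarith
  obtain ⟨tl, htl, hStl⟩ := seq_extract S l hfreq_l
  obtain ⟨tL, htL, hStL⟩ := seq_extract S L hfreq_L
  -- choice of y
  obtain ⟨y, hydef⟩ : ∃ y : ℝ, y = Real.sqrt c / 2 := ⟨_, rfl⟩
  have hsc : Real.sqrt c = 1/β/12 := by
    rw [hcdef, show (1/β)^2/144 = (1/β/12)^2 by ring]
    exact Real.sqrt_sq (by positivity)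
  have hy0 : 0 < y := hydef ▸ by positivity
  have hyc : 2 * y ≤ Real.sqrt c := by rw [hydef]; linarith
  have hyb : 2 * (β * y) ≤ 1 := by
    rw [hydef, hsc]
    rw [show β * (1/β/12/2) = (β * (1/β))/24 by ring, mul_one_div, div_self hβ.ne']
    norm_num
  have hSl : Tendsto (fun k => (tl k)^2 * g (tl k)) atTop (𝓝 l) := by
    have : (fun k => (tl k)^2 * g (tl k)) = fun k => S (tl k) := by
      funext k; rw [hSdef]
    rw [this]; exact hStl
  have hSL : Tendsto (fun k => (tL k)^2 * g (tL k)) atTop (𝓝 L) := by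
    have : (fun k => (tL k)^2 * g (tL k)) = fun k => S (tL k) := by
      funext k; rw [hSdef]
    rw [this]; exact hStL
  obtain ⟨xl, hxl_to, hxl_lim⟩ := key_tendsto g β hβ hgpos hganti huc c C X hc0 hC0
    hbound' y hy0 hyc hyb l tl htl hSl
  obtain ⟨xL, hxL_to, hxL_lim⟩ := key_tendsto g β hβ hgpos hganti huc c C X hc0 hC0
    hbound' y hy0 hyc hyb L tL htL hSL
  have hxl_lim' : Tendsto (fun k => S (xl k)) atTop
      (𝓝 (((Real.sqrt l - y) / (1 - β * y))^2)) := by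
    have : (fun k => S (xl k)) = fun k => (xl k)^2 * g (xl k) := by
      funext k; rw [hSdef]
    rw [this]; exact hxl_lim
  have hxL_lim' : Tendsto (fun k => S (xL k)) atTop
      (𝓝 (((Real.sqrt L - y) / (1 - β * y))^2)) := by
    have : (fun k => S (xL k)) = fun k => (xL k)^2 * g (xL k) := by
      funext k; rw [hSdef]
    rw [this]; exact hxL_lim
  -- liminf/limsup comparisons for subsequential limits
  have hsub_l : l ≤ ((Real.sqrt l - y) / (1 - β * y))^2 := by
    apply le_of_forall_pos_le_add
    intro ε hε
    have hev := eventually_lt_of_lt_liminf (show l - ε < l by linarith) hbl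
    have hev2 : ∀ᶠ k in atTop, l - ε < S (xl k) := hxl_to.eventually hev
    have h5 : l - ε ≤ ((Real.sqrt l - y) / (1 - β * y))^2 :=
      ge_of_tendsto hxl_lim' (hev2.mono fun k hk => hk.le)
    linarith
  have hsub_L : ((Real.sqrt L - y) / (1 - β * y))^2 ≤ L := by
    apply le_of_forall_pos_le_add
    intro ε hε
    have hev := eventually_lt_of_limsup_lt (show L < L + ε by linarith) hbu
    have hev2 : ∀ᶠ k in atTop, S (xL k) < L + ε := hxL_to.eventually hev
    exact le_of_tendsto hxL_lim' (hev2.mono fun k hk => hk.le)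
  -- algebra: conclude bounds on l and L
  have hden : (0:ℝ) < 1 - β * y := by linarith [hy0, hyb]
  have hscl : Real.sqrt c ≤ Real.sqrt l := Real.sqrt_le_sqrt hcl
  have hyl : y < Real.sqrt l := by
    have : 0 < Real.sqrt c := Real.sqrt_pos.2 hc0
    rw [hydef]; linarith
  have hFl_pos : 0 < (Real.sqrt l - y) / (1 - β * y) := div_pos (by linarith) hden
  have h6 : Real.sqrt l ≤ (Real.sqrt l - y) / (1 - β * y) := by
    have h7 := Real.sqrt_le_sqrt hsub_l
    rwa [Real.sqrt_sq hFl_pos.le] at h7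
  have hbl_ge : 1 ≤ β * Real.sqrt l := by
    rw [le_div_iff₀ hden] at h6
    have h9 : y ≤ Real.sqrt l * (β * y) := by nlinarith
    nlinarith [hy0]
  have hl_ge : 1/β^2 ≤ l := by
    have h10 : 1/β ≤ Real.sqrt l := by
      rw [div_le_iff₀ hβ]; linarith [mul_comm β (Real.sqrt l)]
    have h11 : (1/β)^2 ≤ (Real.sqrt l)^2 := by
      apply pow_le_pow_left₀ (by positivity) h10
    rw [Real.sq_sqrt hl0] at h11
    calc 1/β^2 = (1/β)^2 := by ring
    _ ≤ l := h11
  -- L side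
  have hFL_le : (Real.sqrt L - y) / (1 - β * y) ≤ Real.sqrt L := by
    have h12 := Real.sqrt_le_sqrt hsub_L
    rw [Real.sqrt_sq_eq_abs] at h12
    have h13 : Real.sqrt ((Real.sqrt L)^2) = Real.sqrt L := Real.sqrt_sq (Real.sqrt_nonneg _)
    have h14 : L = (Real.sqrt L)^2 := (Real.sq_sqrt hL0).symm
    rw [h14] at h12
    rw [h13] at h12
    calc (Real.sqrt L - y) / (1 - β * y) ≤ |(Real.sqrt L - y) / (1 - β * y)| := le_abs_self _
    _ ≤ Real.sqrt L := h12
  have hbL_le : β * Real.sqrt L ≤ 1 := by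
    rw [div_le_iff₀ hden] at hFL_le
    nlinarith [hy0]
  have hL_le : L ≤ 1/β^2 := by
    have h15 : Real.sqrt L ≤ 1/β := by
      rw [le_div_iff₀ hβ]; linarith [mul_comm (Real.sqrt L) β]
    have h16 : (Real.sqrt L)^2 ≤ (1/β)^2 :=
      pow_le_pow_left₀ (Real.sqrt_nonneg _) h15 2
    rw [Real.sq_sqrt hL0] at h16
    calc L ≤ (1/β)^2 := h16
    _ = 1/β^2 := by ring
  have hlv : l = 1/β^2 := le_antisymm (hlL.trans hL_le) hl_ge
  have hLv : L = 1/β^2 := le_antisymm hL_le (hl_ge.trans hlL)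
  exact tendsto_of_liminf_eq_limsup hlv hLv hbu hbl
end

section
/- Let σ, η > 0. The function u(x) = 6η²/(σ²·x²) is the unique nonnegative, twice continuously differentiable function u : (0,∞) → ℝ satisfying u''(x) = (σ²/η²)·u(x)² for all x > 0, lim_{x→0+} u(x) = ∞, and lim_{x→∞} u(x) = 0. -/
/-!
Write `c = σ²/η²`. Since `u'' = c u² ≥ 0`, `u'` is nondecreasing, so `u' ≤ 0`: otherwise `u`
would grow linearly instead of tending to `0`. The energy `u'² - (2c/3) u³` is constant, and its
value `K` is `0`: `K ≥ 0` as `u → 0`, while `K > 0` would give `u' ≤ -√K` and make `u` negative.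
So `u'² = (2c/3) u³`, whence `|u'| ≤ L u` on every `[y, ∞)` and `u` stays positive (Grönwall).
Then `(√u)⁻¹` has constant derivative `√(c/6)` and tends to `0` at `0+`, so `(√u)⁻¹ = √(c/6) x`,
i.e. `u = 6 / (c x²)`.
-/

open Filter Real Set Topology

lemma monotoneOn_of_hasDerivAt_nonneg {D : Set ℝ} (hD : Convex ℝ D) {f f' : ℝ → ℝ}
    (hf : ∀ x ∈ D, HasDerivAt f (f' x) x) (hf' : ∀ x ∈ D, 0 ≤ f' x) : MonotoneOn f D :=
  monotoneOn_of_hasDerivWithinAt_nonneg hD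
    (fun x hx => (hf x hx).continuousAt.continuousWithinAt)
    (fun x hx => (hf x (interior_subset hx)).hasDerivWithinAt)
    (fun x hx => hf' x (interior_subset hx))

lemma exists_eq_mul_add_of_hasDerivAt {s : Set ℝ} (hs : IsOpen s) (hs' : IsPreconnected s)
    {f : ℝ → ℝ} {k : ℝ} (hf : ∀ x ∈ s, HasDerivAt f k x) : ∃ C, ∀ x ∈ s, f x = k * x + C := by
  have hlin : ∀ x, HasDerivAt (fun x => k * x) k x := fun x => by
    simpa using (hasDerivAt_id x).const_mul k
  obtain ⟨C, hC⟩ := hs.exists_eq_add_of_deriv_eq hs'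
    (fun x hx => (hf x hx).differentiableAt.differentiableWithinAt)
    (fun x _ => (hlin x).differentiableAt.differentiableWithinAt)
    (fun x hx => by simp only [(hf x hx).deriv, (hlin x).deriv])
  exact ⟨C, fun x hx => hC hx⟩

lemma tendsto_atTop_of_pos_le_deriv {f f' : ℝ → ℝ} {a m : ℝ} (hm : 0 < m)
    (hf : ∀ x ∈ Ici a, HasDerivAt f (f' x) x) (hf' : ∀ x ∈ Ici a, m ≤ f' x) :
    Tendsto f atTop atTop := by
  have hmono : MonotoneOn (fun x => f x - m * x) (Ici a) :=
    monotoneOn_of_hasDerivAt_nonneg (convex_Ici a)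
      (fun x hx => (hf x hx).sub ((hasDerivAt_id x).const_mul m))
      (fun x hx => by simpa using hf' x hx)
  refine tendsto_atTop_mono' atTop ?_
    ((tendsto_id.const_mul_atTop hm).atTop_add (tendsto_const_nhds (x := f a - m * a)))
  filter_upwards [eventually_ge_atTop a] with x hx
  have hax := hmono self_mem_Ici hx hx
  simp only [id] at hax ⊢
  linarith

lemma pos_of_neg_mul_le_deriv {f f' : ℝ → ℝ} {a L : ℝ}
    (hf : ∀ x ∈ Ici a, HasDerivAt f (f' x) x) (hf' : ∀ x ∈ Ici a, -L * f x ≤ f' x)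
    (ha : 0 < f a) : ∀ x ∈ Ici a, 0 < f x := by
  have hmono : MonotoneOn (fun x => f x * exp (L * x)) (Ici a) := by
    refine monotoneOn_of_hasDerivAt_nonneg (convex_Ici a)
      (fun x hx => (hf x hx).mul (((hasDerivAt_id x).const_mul L).exp)) (fun x hx => ?_)
    have hfx := hf' x hx
    simp only [id, mul_one]
    nlinarith [exp_pos (L * x)]
  intro x hx
  have hax := hmono self_mem_Ici hx hx
  exact pos_of_mul_pos_left ((by positivity : 0 < f a * exp (L * a)).trans_le hax) (exp_pos _).le

section AutonomousODE

variable {c : ℝ} {u u' : ℝ → ℝ}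

lemma ode_deriv_nonpos (hc : 0 ≤ c) (hu : ∀ x ∈ Ioi (0 : ℝ), HasDerivAt u (u' x) x)
    (hu' : ∀ x ∈ Ioi (0 : ℝ), HasDerivAt u' (c * u x ^ 2) x) {l : ℝ}
    (hinf : Tendsto u atTop (𝓝 l)) : ∀ x ∈ Ioi (0 : ℝ), u' x ≤ 0 := by
  have hmono : MonotoneOn u' (Ioi 0) :=
    monotoneOn_of_hasDerivAt_nonneg (convex_Ioi 0) hu' (fun x _ => by positivity)
  intro x₀ hx₀
  by_contra! hpos
  have hsub : Ici x₀ ⊆ Ioi 0 := Ici_subset_Ioi.2 hx₀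
  exact not_tendsto_atTop_of_tendsto_nhds hinf <| tendsto_atTop_of_pos_le_deriv hpos
    (fun x hx => hu x (hsub hx)) (fun x hx => hmono hx₀ (hsub hx) hx)

lemma ode_energy_eq_zero (hc : 0 ≤ c) (hu : ∀ x ∈ Ioi (0 : ℝ), HasDerivAt u (u' x) x)
    (hu' : ∀ x ∈ Ioi (0 : ℝ), HasDerivAt u' (c * u x ^ 2) x)
    (hnn : ∀ x ∈ Ioi (0 : ℝ), 0 ≤ u x) (hinf : Tendsto u atTop (𝓝 0)) :
    ∀ x ∈ Ioi (0 : ℝ), u' x ^ 2 = 2 * c / 3 * u x ^ 3 := by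
  obtain ⟨K, hK⟩ : ∃ K, ∀ x ∈ Ioi (0 : ℝ), u' x ^ 2 - 2 * c / 3 * u x ^ 3 = 0 * x + K := by
    refine exists_eq_mul_add_of_hasDerivAt isOpen_Ioi isPreconnected_Ioi fun x hx => ?_
    refine (((hu' x hx).fun_pow 2).sub (((hu x hx).fun_pow 3).const_mul (2 * c / 3))).congr_deriv ?_
    norm_num
    ring
  simp only [zero_mul, zero_add] at hK
  have hK_nonneg : 0 ≤ K := by
    have hlim : Tendsto (fun x => -(2 * c / 3) * u x ^ 3) atTop (𝓝 0) := by
      simpa using (hinf.pow 3).const_mul (-(2 * c / 3))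
    refine le_of_tendsto hlim ?_
    filter_upwards [eventually_gt_atTop 0] with x hx
    nlinarith [hK x hx, sq_nonneg (u' x)]
  suffices hK_nonpos : ¬ 0 < K by
    intro x hx
    linarith [hK x hx, le_antisymm (not_lt.1 hK_nonpos) hK_nonneg]
  intro hK_pos
  have hslope : ∀ x ∈ Ici (1 : ℝ), √K ≤ -u' x := by
    intro x hx
    have hx : x ∈ Ioi (0 : ℝ) := mem_Ioi.2 (lt_of_lt_of_le one_pos hx)
    have hsq : √K ^ 2 ≤ (-u' x) ^ 2 := by
      rw [sq_sqrt hK_nonneg, neg_sq]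
      nlinarith [hK x hx, pow_nonneg (hnn x hx) 3]
    exact (abs_le_of_sq_le_sq' hsq (by linarith [ode_deriv_nonpos hc hu hu' hinf x hx])).2
  have hneg : Tendsto (fun x => -u x) atTop (𝓝 0) := by simpa using hinf.neg
  exact not_tendsto_atTop_of_tendsto_nhds hneg <| tendsto_atTop_of_pos_le_deriv (sqrt_pos.2 hK_pos)
    (fun x hx => (hu x (mem_Ioi.2 (lt_of_lt_of_le one_pos hx))).neg) hslope

lemma ode_pos (hc : 0 ≤ c) (hu : ∀ x ∈ Ioi (0 : ℝ), HasDerivAt u (u' x) x)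
    (hu' : ∀ x ∈ Ioi (0 : ℝ), HasDerivAt u' (c * u x ^ 2) x)
    (hnn : ∀ x ∈ Ioi (0 : ℝ), 0 ≤ u x) (h0 : Tendsto u (𝓝[>] 0) atTop)
    (hinf : Tendsto u atTop (𝓝 0)) : ∀ x ∈ Ioi (0 : ℝ), 0 < u x := by
  have hdec := ode_deriv_nonpos hc hu hu' hinf
  have henergy := ode_energy_eq_zero hc hu hu' hnn hinf
  have hanti : AntitoneOn u (Ioi 0) :=
    antitoneOn_of_hasDerivWithinAt_nonpos (convex_Ioi 0)
      (fun x hx => (hu x hx).continuousAt.continuousWithinAt)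
      (fun x hx => (hu x (interior_subset hx)).hasDerivWithinAt)
      (fun x hx => hdec x (interior_subset hx))
  obtain ⟨y, hy_pos, hy⟩ : ∃ y, 0 < u y ∧ y ∈ Ioi (0 : ℝ) :=
    ((h0.eventually (eventually_gt_atTop 0)).and self_mem_nhdsWithin).exists
  have hsub : Ici y ⊆ Ioi 0 := Ici_subset_Ioi.2 hy
  -- `u ≤ u y` on `[y, ∞)`, so `|u'| = √(2c/3 · u) · u ≤ L · u`
  set L := √(2 * c / 3 * u y)
  have hbound : ∀ x ∈ Ici y, -L * u x ≤ u' x := by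
    intro x hx
    have hux := hnn x (hsub hx)
    have hsq : u' x ^ 2 ≤ (L * u x) ^ 2 := by
      rw [henergy x (hsub hx), mul_pow, sq_sqrt (by positivity)]
      have hxy : u x ≤ u y := hanti hy (hsub hx) hx
      have hcu : 0 ≤ 2 * c / 3 * u x ^ 2 := by positivity
      nlinarith
    simpa using (abs_le_of_sq_le_sq' hsq (by positivity)).1
  intro x hx
  rcases le_total y x with hyx | hxy
  · exact pos_of_neg_mul_le_deriv (fun x hx => hu x (hsub hx)) hbound hy_pos x hyx
  · exact hy_pos.trans_le (hanti hx hy hxy)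

lemma hasDerivAt_inv_sqrt_of_sq_deriv_eq {x d : ℝ} (hd : HasDerivAt u d x)
    (hux : 0 < u x) (hd_nonpos : d ≤ 0) (hd_sq : d ^ 2 = 2 * c / 3 * u x ^ 3) :
    HasDerivAt (fun t => (√(u t))⁻¹) √(c / 6) x := by
  have hs : 0 < √(u x) := sqrt_pos.2 hux
  refine ((hd.sqrt hux.ne').inv hs.ne').congr_deriv ?_
  have hs2 : √(u x) ^ 2 = u x := sq_sqrt hux.le
  have hv : 0 ≤ -(d / (2 * √(u x))) / √(u x) ^ 2 := by
    have : d / (2 * √(u x)) ≤ 0 := div_nonpos_of_nonpos_of_nonneg hd_nonpos (by positivity)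
    exact div_nonneg (by linarith) (by positivity)
  rw [← sqrt_sq hv]
  congr 1
  rw [← hs2] at hd_sq
  field_simp
  rw [hd_sq]
  ring

lemma ode_solution_eq (hc : 0 < c) (hu : ∀ x ∈ Ioi (0 : ℝ), HasDerivAt u (u' x) x)
    (hu' : ∀ x ∈ Ioi (0 : ℝ), HasDerivAt u' (c * u x ^ 2) x)
    (hnn : ∀ x ∈ Ioi (0 : ℝ), 0 ≤ u x) (h0 : Tendsto u (𝓝[>] 0) atTop)
    (hinf : Tendsto u atTop (𝓝 0)) : ∀ x ∈ Ioi (0 : ℝ), u x = 6 / (c * x ^ 2) := by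
  have hpos := ode_pos hc.le hu hu' hnn h0 hinf
  obtain ⟨C, hC⟩ := exists_eq_mul_add_of_hasDerivAt isOpen_Ioi isPreconnected_Ioi fun x hx =>
    hasDerivAt_inv_sqrt_of_sq_deriv_eq (hu x hx) (hpos x hx)
      (ode_deriv_nonpos hc.le hu hu' hinf x hx) (ode_energy_eq_zero hc.le hu hu' hnn hinf x hx)
  have hC0 : C = 0 := by
    have hw : Tendsto (fun t => (√(u t))⁻¹) (𝓝[>] 0) (𝓝 0) :=
      tendsto_inv_atTop_zero.comp (tendsto_sqrt_atTop.comp h0)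
    have hlin : Tendsto (fun t => √(c / 6) * t + C) (𝓝[>] 0) (𝓝 C) := by
      simpa using ((Continuous.tendsto (by fun_prop) 0).mono_left nhdsWithin_le_nhds :
        Tendsto (fun t => √(c / 6) * t + C) (𝓝[>] 0) (𝓝 (√(c / 6) * 0 + C)))
    refine tendsto_nhds_unique (hlin.congr' ?_) hw
    filter_upwards [self_mem_nhdsWithin] with t ht using (hC t ht).symm
  intro x hx
  have hw : (√(u x))⁻¹ = √(c / 6) * x := by simpa [hC0] using hC x hx
  have hk : √(c / 6) ^ 2 = c / 6 := sq_sqrt (by positivity)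
  rw [← sq_sqrt (hnn x hx), ← inv_inv √(u x), hw, inv_pow, mul_pow, hk]
  field_simp

end AutonomousODE

lemma hasDerivAt_deriv_of_contDiffOn_two {f : ℝ → ℝ} {s : Set ℝ} (hs : IsOpen s)
    (hf : ContDiffOn ℝ 2 f s) {x : ℝ} (hx : x ∈ s) :
    HasDerivAt f (deriv f x) x ∧ HasDerivAt (deriv f) (deriv (deriv f) x) x :=
  have hf' : ContDiffOn ℝ 1 (deriv f) s := hf.deriv_of_isOpen hs (by norm_num)
  ⟨((hf.differentiableOn (by norm_num)).differentiableAt (hs.mem_nhds hx)).hasDerivAt,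
    ((hf'.differentiableOn one_ne_zero).differentiableAt (hs.mem_nhds hx)).hasDerivAt⟩

lemma hasDerivAt_div_mul_pow (a : ℝ) {b x : ℝ} (n : ℕ) (hb : b ≠ 0) (hx : x ≠ 0) :
    HasDerivAt (fun z => a / (b * z ^ n)) (-n * a / (b * x ^ (n + 1))) x := by
  refine ((hasDerivAt_const x a).div ((hasDerivAt_pow n x).const_mul b)
    (by positivity)).congr_deriv ?_
  rcases n with _ | n
  · simp
  · field_simp
    simp only [Nat.add_sub_cancel]
    ring

lemma deriv_deriv_div_mul_sq (a : ℝ) {b x : ℝ} (hb : b ≠ 0) (hx : x ≠ 0) :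
    deriv (deriv fun z => a / (b * z ^ 2)) x = 6 * a / (b * x ^ 4) := by
  have hderiv : deriv (fun z => a / (b * z ^ 2)) =ᶠ[𝓝 x]
      fun z => -(2 : ℕ) * a / (b * z ^ (2 + 1)) := by
    filter_upwards [isOpen_ne.mem_nhds hx] with z hz
    exact (hasDerivAt_div_mul_pow a 2 hb hz).deriv
  rw [hderiv.deriv_eq, (hasDerivAt_div_mul_pow _ (2 + 1) hb hx).deriv]
  push_cast
  ring

lemma tendsto_div_mul_sq_nhdsGT_zero {a b : ℝ} (ha : 0 < a) (hb : 0 < b) :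
    Tendsto (fun x => a / (b * x ^ 2)) (𝓝[>] 0) atTop := by
  have hden : Tendsto (fun x : ℝ => b * x ^ 2) (𝓝[>] 0) (𝓝[>] 0) := by
    refine tendsto_nhdsWithin_of_tendsto_nhds_of_eventually_within _ ?_ ?_
    · simpa using ((Continuous.tendsto (by fun_prop) 0).mono_left nhdsWithin_le_nhds :
        Tendsto (fun x : ℝ => b * x ^ 2) (𝓝[>] 0) (𝓝 (b * 0 ^ 2)))
    · filter_upwards [self_mem_nhdsWithin] with x (hx : 0 < x)
      exact mem_Ioi.2 (by positivity)
  simpa only [div_eq_mul_inv, Pi.inv_apply] using hden.inv_tendsto_nhdsGT_zero.const_mul_atTop ha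

/-- cf. Proposition 21 of Lalley–Shao / Dynkin: for `σ, η > 0`,
the function `u(x) = 6η²/(σ²x²)` is the unique nonnegative, twice continuously
differentiable solution on `(0,∞)` of `u'' = (σ²/η²)u²` with `u(0+) = ∞` and
`u(∞) = 0`. -/
theorem sbm_max_ode_unique (σ η : ℝ) (hσ : 0 < σ) (hη : 0 < η) :
    ((∀ x : ℝ, 0 < x → 0 ≤ 6 * η ^ 2 / (σ ^ 2 * x ^ 2))
      ∧ ContDiffOn ℝ 2 (fun x : ℝ => 6 * η ^ 2 / (σ ^ 2 * x ^ 2)) (Set.Ioi 0)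
      ∧ (∀ x : ℝ, 0 < x →
          deriv (deriv (fun z : ℝ => 6 * η ^ 2 / (σ ^ 2 * z ^ 2))) x
            = (σ ^ 2 / η ^ 2) * (6 * η ^ 2 / (σ ^ 2 * x ^ 2)) ^ 2)
      ∧ Tendsto (fun x : ℝ => 6 * η ^ 2 / (σ ^ 2 * x ^ 2))
          (nhdsWithin 0 (Set.Ioi 0)) atTop
      ∧ Tendsto (fun x : ℝ => 6 * η ^ 2 / (σ ^ 2 * x ^ 2)) atTop (nhds 0))
    ∧ ∀ ψ : ℝ → ℝ,
        (∀ x : ℝ, 0 < x → 0 ≤ ψ x) →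
        ContDiffOn ℝ 2 ψ (Set.Ioi 0) →
        (∀ x : ℝ, 0 < x → deriv (deriv ψ) x = (σ ^ 2 / η ^ 2) * (ψ x) ^ 2) →
        Tendsto ψ (nhdsWithin 0 (Set.Ioi 0)) atTop →
        Tendsto ψ atTop (nhds 0) →
        ∀ x : ℝ, 0 < x → ψ x = 6 * η ^ 2 / (σ ^ 2 * x ^ 2) := by
  refine ⟨⟨fun x _ => by positivity, ?_, fun x hx => ?_,
    tendsto_div_mul_sq_nhdsGT_zero (by positivity) (by positivity),
    tendsto_const_nhds.div_atTop ((tendsto_pow_atTop two_ne_zero).const_mul_atTop (by positivity))⟩,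
    fun ψ hnn hsm hode h0 hinf x hx => ?_⟩
  · exact contDiffOn_const.div (contDiffOn_const.mul (contDiffOn_id.pow 2))
      fun x (hx : 0 < x) => by positivity
  · rw [deriv_deriv_div_mul_sq _ (by positivity) hx.ne']
    field_simp
  · have hψ (x : ℝ) (hx : x ∈ Ioi (0 : ℝ)) := hasDerivAt_deriv_of_contDiffOn_two isOpen_Ioi hsm hx
    have hψ' (x : ℝ) (hx : x ∈ Ioi (0 : ℝ)) : HasDerivAt (deriv ψ) (σ ^ 2 / η ^ 2 * ψ x ^ 2) x :=
      hode x hx ▸ (hψ x hx).2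
    rw [ode_solution_eq (by positivity) (fun x hx => (hψ x hx).1) hψ' hnn h0 hinf x hx]
    field_simp
end
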